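/- arXiv:1812.08638 — 6 statements merged into one kernel-verified Lean document; each statement's English description precedes it below -/
import Mathlib

section
/- Let g : ℝ^d → ℝ be a bounded measurable function and let β > -d. Then for almost every x ∈ ℝ^d, the limit as r → 0 of (1/r^{β+d}) ∫_{B(x,r)} ‖x-y‖^β g(y) dy equals (d·κ_d/(β+d))·g(x), where κ_d is the volume of the d-dimensional unit ball. -/
/-!
Split `∫_{B(x,r)} ‖x-y‖^β g(y) dy` as
`g(x) ∫_{B(x,r)} ‖x-y‖^β dy + ∫_{B(x,r)} ‖x-y‖^β (g(y) - g(x)) dy`. In polar coordinates the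
first integral is exactly `d κ_d r^(β+d) / (β+d)`. For the second, cut `B(x,r) \ {x}` into the
dyadic annuli `r 2^(-k-1) < ‖x-y‖ ≤ r 2^(-k)`: on the `k`-th one the weight is comparable to
`(r 2^(-k))^β`, so at a Lebesgue point of `g`, where `∫_{B(x,s)} |g - g(x)| = o(s^d)`, the annuli
contribute `o(r^(β+d))` times the geometric series `∑ 2^(-k(β+d))`, which converges because
`β + d > 0`.
-/

open MeasureTheory Filter Metric Set Topology
open scoped ENNReal

lemma rpow_le_max_one_two_rpow_neg_mul {a t : ℝ} (β : ℝ) (hat : a / 2 < t) (hta : t ≤ a) :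
    t ^ β ≤ max 1 (2 ^ (-β)) * a ^ β := by
  have ha : 0 < a := by linarith
  have ht : 0 < t := by linarith
  rcases le_or_gt 0 β with hβ | hβ
  · calc t ^ β ≤ a ^ β := Real.rpow_le_rpow ht.le hta hβ
      _ ≤ max 1 (2 ^ (-β)) * a ^ β :=
        le_mul_of_one_le_left (by positivity) (le_max_left _ _)
  · calc t ^ β ≤ (a / 2) ^ β := Real.rpow_le_rpow_of_nonpos (by positivity) hat.le hβ.le
      _ = 2 ^ (-β) * a ^ β := by
        rw [Real.div_rpow ha.le zero_le_two, Real.rpow_neg zero_le_two, div_eq_inv_mul]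
      _ ≤ max 1 (2 ^ (-β)) * a ^ β := by gcongr; exact le_max_right _ _

section Annuli

variable {X : Type*} [MetricSpace X]

lemma closedBall_diff_singleton_subset_iUnion (x : X) (r : ℝ) :
    closedBall x r \ {x} ⊆ ⋃ k : ℕ, closedBall x (r / 2 ^ k) \ closedBall x (r / 2 ^ k / 2) := by
  rintro y ⟨hyr, hyx⟩
  have hy : 0 < dist y x := dist_pos.2 hyx
  obtain ⟨k, hk, hk'⟩ := exists_nat_pow_near ((one_le_div hy).2 hyr) one_lt_two
  rw [le_div_iff₀ hy] at hk
  rw [div_lt_iff₀ hy, pow_succ] at hk'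
  refine mem_iUnion.2 ⟨k, ?_, ?_⟩
  · rw [mem_closedBall, le_div_iff₀ (by positivity)]
    linarith
  · rw [mem_closedBall, not_le, div_div, div_lt_iff₀ (by positivity)]
    linarith

/-- `max 1 (2 ^ (-β))` bounds the oscillation of `t ^ β` on one dyadic annulus, and the second
factor is the sum of the geometric series `∑ 2 ^ (-(β + D) k)` over the annuli. -/
noncomputable def annuliConst (β D : ℝ) : ℝ≥0∞ :=
  ENNReal.ofReal (max 1 (2 ^ (-β))) * (1 - ENNReal.ofReal (2 ^ (-(β + D))))⁻¹

lemma annuliConst_ne_top {β D : ℝ} (h : 0 < β + D) : annuliConst β D ≠ ∞ := by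
  refine ENNReal.mul_ne_top ENNReal.ofReal_ne_top (ENNReal.inv_ne_top.2 ?_)
  refine (tsub_pos_iff_lt.2 ?_).ne'
  rw [ENNReal.ofReal_lt_one]
  exact Real.rpow_lt_one_of_one_lt_of_neg one_lt_two (neg_neg_of_pos h)

variable [MeasurableSpace X] [OpensMeasurableSpace X] (μ : Measure X)

lemma setLIntegral_annulus_dist_rpow_mul_le (x : X) {a β D : ℝ} (ha : 0 < a)
    {ε : ℝ≥0∞} {h : X → ℝ≥0∞}
    (hball : ∫⁻ y in closedBall x a, h y ∂μ ≤ ε * ENNReal.ofReal (a ^ D)) :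
    ∫⁻ y in closedBall x a \ closedBall x (a / 2), ENNReal.ofReal (dist x y ^ β) * h y ∂μ
      ≤ ENNReal.ofReal (max 1 (2 ^ (-β))) * ε * ENNReal.ofReal (a ^ (β + D)) := by
  set M := max (1 : ℝ) (2 ^ (-β))
  have hweight : ∀ y ∈ closedBall x a \ closedBall x (a / 2),
      ENNReal.ofReal (dist x y ^ β) * h y ≤ ENNReal.ofReal (M * a ^ β) * h y := by
    rintro y ⟨hya, hy2⟩
    rw [mem_closedBall, dist_comm] at hya hy2
    gcongr
    exact rpow_le_max_one_two_rpow_neg_mul β (not_le.1 hy2) hya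
  calc ∫⁻ y in closedBall x a \ closedBall x (a / 2), ENNReal.ofReal (dist x y ^ β) * h y ∂μ
      ≤ ∫⁻ y in closedBall x a \ closedBall x (a / 2), ENNReal.ofReal (M * a ^ β) * h y ∂μ :=
        setLIntegral_mono' (measurableSet_closedBall.diff measurableSet_closedBall) hweight
    _ ≤ ∫⁻ y in closedBall x a, ENNReal.ofReal (M * a ^ β) * h y ∂μ :=
        lintegral_mono_set sdiff_subset
    _ = ENNReal.ofReal (M * a ^ β) * ∫⁻ y in closedBall x a, h y ∂μ :=
        lintegral_const_mul' _ _ ENNReal.ofReal_ne_top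
    _ ≤ ENNReal.ofReal (M * a ^ β) * (ε * ENNReal.ofReal (a ^ D)) := by gcongr
    _ = ENNReal.ofReal M * ε * ENNReal.ofReal (a ^ (β + D)) := by
      rw [Real.rpow_add ha, ENNReal.ofReal_mul (by positivity), ENNReal.ofReal_mul (by positivity)]
      ring

lemma lintegral_closedBall_dist_rpow_mul_le [NullSingletonClass μ] (x : X) {r β D : ℝ}
    (hr : 0 < r) {ε : ℝ≥0∞} {h : X → ℝ≥0∞}
    (hball : ∀ s ∈ Ioc 0 r, ∫⁻ y in closedBall x s, h y ∂μ ≤ ε * ENNReal.ofReal (s ^ D)) :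
    ∫⁻ y in closedBall x r, ENNReal.ofReal (dist x y ^ β) * h y ∂μ
      ≤ annuliConst β D * ε * ENNReal.ofReal (r ^ (β + D)) := by
  set M := ENNReal.ofReal (max 1 (2 ^ (-β)))
  set q := ENNReal.ofReal (2 ^ (-(β + D)))
  have hradius : ∀ k : ℕ, 0 < r / 2 ^ k ∧ r / 2 ^ k ≤ r := fun k =>
    ⟨by positivity, div_le_self hr.le (one_le_pow₀ one_le_two)⟩
  have hscale : ∀ k : ℕ,
      ENNReal.ofReal ((r / 2 ^ k) ^ (β + D)) = ENNReal.ofReal (r ^ (β + D)) * q ^ k := by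
    intro k
    rw [← ENNReal.ofReal_pow (by positivity), ← ENNReal.ofReal_mul (by positivity),
      Real.div_rpow hr.le (by positivity), ← Real.rpow_natCast_mul zero_le_two, mul_comm,
      Real.rpow_mul_natCast, Real.rpow_neg zero_le_two, div_eq_mul_inv, inv_pow]
    exact zero_le_two
  calc ∫⁻ y in closedBall x r, ENNReal.ofReal (dist x y ^ β) * h y ∂μ
      = ∫⁻ y in closedBall x r \ {x}, ENNReal.ofReal (dist x y ^ β) * h y ∂μ :=
        setLIntegral_congr (sdiff_null_ae_eq_self (measure_singleton x)).symm
    _ ≤ ∫⁻ y in ⋃ k : ℕ, closedBall x (r / 2 ^ k) \ closedBall x (r / 2 ^ k / 2),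
          ENNReal.ofReal (dist x y ^ β) * h y ∂μ :=
        lintegral_mono_set (closedBall_diff_singleton_subset_iUnion x r)
    _ ≤ ∑' k : ℕ, ∫⁻ y in closedBall x (r / 2 ^ k) \ closedBall x (r / 2 ^ k / 2),
          ENNReal.ofReal (dist x y ^ β) * h y ∂μ := lintegral_iUnion_le _ _
    _ ≤ ∑' k : ℕ, M * ε * ENNReal.ofReal (r ^ (β + D)) * q ^ k := by
        refine ENNReal.tsum_le_tsum fun k => ?_
        rw [mul_assoc _ (ENNReal.ofReal _), ← hscale]
        exact setLIntegral_annulus_dist_rpow_mul_le μ x (hradius k).1 (hball _ (hradius k))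
    _ = annuliConst β D * ε * ENNReal.ofReal (r ^ (β + D)) := by
        rw [ENNReal.tsum_mul_left, ENNReal.tsum_geometric, annuliConst]
        ring

theorem tendsto_lintegral_closedBall_dist_rpow_mul_div [NullSingletonClass μ] (x : X)
    {β D : ℝ} (hβD : 0 < β + D) {h : X → ℝ≥0∞}
    (hlim : Tendsto (fun s => (∫⁻ y in closedBall x s, h y ∂μ) / ENNReal.ofReal (s ^ D))
      (𝓝[>] 0) (𝓝 0)) :
    Tendsto (fun r => (∫⁻ y in closedBall x r, ENNReal.ofReal (dist x y ^ β) * h y ∂μ) /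
      ENNReal.ofReal (r ^ (β + D))) (𝓝[>] 0) (𝓝 0) := by
  rw [ENNReal.tendsto_nhds_zero] at hlim ⊢
  intro ε hε
  obtain ⟨η, hη, hηε⟩ := ENNReal.exists_pos_mul_lt (annuliConst_ne_top hβD) hε.ne'
  obtain ⟨δ, hδ, hsmall⟩ := mem_nhdsGT_iff_exists_Ioo_subset.1 (hlim η hη)
  filter_upwards [Ioo_mem_nhdsGT hδ] with r ⟨hr, hrδ⟩
  have hball : ∀ s ∈ Ioc 0 r, ∫⁻ y in closedBall x s, h y ∂μ ≤ η * ENNReal.ofReal (s ^ D) := by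
    rintro s ⟨hs, hsr⟩
    have hpos : 0 < s ^ D := Real.rpow_pos_of_pos hs D
    exact (ENNReal.div_le_iff (ENNReal.ofReal_pos.2 hpos).ne' ENNReal.ofReal_ne_top).1
      (hsmall ⟨hs, hsr.trans_lt hrδ⟩)
  refine ENNReal.div_le_of_le_mul ?_
  calc _ ≤ annuliConst β D * η * ENNReal.ofReal (r ^ (β + D)) :=
        lintegral_closedBall_dist_rpow_mul_le μ x hr hball
    _ ≤ ε * ENNReal.ofReal (r ^ (β + D)) := by
        rw [mul_comm (annuliConst β D)]
        gcongr

end Annuli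

section AddHaar

open Module

variable {E : Type*} [NormedAddCommGroup E] [NormedSpace ℝ E] [FiniteDimensional ℝ E]
  [MeasurableSpace E] [BorelSpace E] (μ : Measure E) [μ.IsAddHaarMeasure]

theorem integrableOn_closedBall_norm_sub_rpow [Nontrivial E] (x : E) {β : ℝ}
    (hβ : 0 < β + finrank ℝ E) (r : ℝ) :
    IntegrableOn (fun y => ‖x - y‖ ^ β) (closedBall x r) μ := by
  have hloc : LocallyIntegrable (fun z : E => ‖z‖ ^ β) μ :=
    locallyIntegrable_of_norm_le_rpow (C := 1) (α := -β) Module.finrank_pos (by linarith)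
      (.of_forall fun z => by rw [neg_neg, one_mul, Real.norm_of_nonneg (by positivity)])
      (measurable_norm.pow_const β).aestronglyMeasurable
  have hpre : (x - ·) ⁻¹' closedBall 0 r = closedBall x r := by
    ext y
    simp [dist_eq_norm, norm_sub_rev]
  rw [← hpre]
  exact ((Measure.measurePreserving_sub_left μ x).integrableOn_comp_preimage
    (MeasurableEquiv.subLeft x).measurableEmbedding).2
    (hloc.integrableOn_isCompact (isCompact_closedBall 0 r))

theorem integral_closedBall_norm_sub_rpow [Nontrivial E] (x : E) {β r : ℝ}
    (hβ : 0 < β + finrank ℝ E) (hr : 0 < r) :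
    ∫ y in closedBall x r, ‖x - y‖ ^ β ∂μ
      = finrank ℝ E * μ.real (ball 0 1) / (β + finrank ℝ E) * r ^ (β + finrank ℝ E) := by
  set d := finrank ℝ E
  have hd : 1 ≤ d := finrank_pos
  have hradial : ∫ y in closedBall x r, ‖x - y‖ ^ β ∂μ
      = ∫ z, (Iic r).indicator (· ^ β) ‖z‖ ∂μ := by
    rw [← integral_indicator measurableSet_closedBall,
      ← integral_sub_left_eq_self (fun z => (Iic r).indicator (· ^ β) ‖z‖) μ x]
    congr 1 with y
    classical
    rw [indicator_apply, indicator_apply]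
    simp only [mem_closedBall, mem_Iic, dist_eq_norm, norm_sub_rev]
  have hpolar : ∫ t in Ioi (0 : ℝ), t ^ (d - 1) • (Iic r).indicator (· ^ β) t
      = r ^ (β + d) / (β + d) := by
    have hpow : ∀ t ∈ Ioc (0 : ℝ) r, t ^ (d - 1) * t ^ β = t ^ (β + d - 1) := by
      intro t ht
      rw [← Real.rpow_natCast, Nat.cast_sub hd, Nat.cast_one, ← Real.rpow_add ht.1]
      ring_nf
    simp_rw [smul_eq_mul]
    rw [integral_congr_ae (.of_forall fun t =>
      (indicator_mul_right (Iic r) (fun t : ℝ => t ^ (d - 1)) (· ^ β) (i := t)).symm)]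
    rw [setIntegral_indicator measurableSet_Iic, Ioi_inter_Iic,
      setIntegral_congr_fun measurableSet_Ioc hpow, ← intervalIntegral.integral_of_le hr.le,
      integral_rpow (Or.inl (by linarith)), sub_add_cancel, Real.zero_rpow hβ.ne', sub_zero]
  rw [hradial, integral_fun_norm_addHaar μ, hpolar, nsmul_eq_mul, smul_eq_mul]
  ring

theorem ae_tendsto_lintegral_closedBall_enorm_sub_div_rpow {F : Type*} [NormedAddCommGroup F]
    {f : E → F} (hf : LocallyIntegrable f μ) :
    ∀ᵐ x ∂μ, Tendsto (fun s => (∫⁻ y in closedBall x s, ‖f y - f x‖ₑ ∂μ) /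
      ENNReal.ofReal (s ^ (finrank ℝ E : ℝ))) (𝓝[>] 0) (𝓝 0) := by
  filter_upwards [(Besicovitch.vitaliFamily μ).ae_tendsto_lintegral_enorm_sub_div hf] with x hx
  have hunit : μ (closedBall 0 1) ≠ ∞ := measure_closedBall_lt_top.ne
  have hunit' : μ (closedBall 0 1) ≠ 0 := (measure_closedBall_pos μ 0 one_pos).ne'
  have := ENNReal.Tendsto.mul_const (hx.comp (Besicovitch.tendsto_filterAt μ x)) (Or.inr hunit)
  rw [zero_mul] at this
  refine this.congr' ?_
  filter_upwards [self_mem_nhdsWithin] with s (hs : 0 < s)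
  rw [Function.comp_apply, Measure.addHaar_closedBall' μ x hs.le, Real.rpow_natCast,
    ENNReal.div_eq_inv_mul, ENNReal.div_eq_inv_mul,
    ENNReal.mul_inv (Or.inr hunit) (Or.inr hunit'),
    mul_comm _ (μ (closedBall 0 1))⁻¹, mul_comm, ← mul_assoc, ← mul_assoc,
    ENNReal.mul_inv_cancel hunit' hunit, one_mul]

theorem ae_tendsto_smul_integral_closedBall_norm_sub_rpow_smul_sub [Nontrivial E]
    {F : Type*} [NormedAddCommGroup F] [NormedSpace ℝ F] {f : E → F} (hf : LocallyIntegrable f μ)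
    {β : ℝ} (hβ : 0 < β + finrank ℝ E) :
    ∀ᵐ x ∂μ, Tendsto (fun r => (1 / r ^ (β + finrank ℝ E)) •
      ∫ y in closedBall x r, ‖x - y‖ ^ β • (f y - f x) ∂μ) (𝓝[>] 0) (𝓝 0) := by
  filter_upwards [ae_tendsto_lintegral_closedBall_enorm_sub_div_rpow μ hf] with x hx
  have hlim := (ENNReal.tendsto_toReal ENNReal.zero_ne_top).comp
    (tendsto_lintegral_closedBall_dist_rpow_mul_div μ x hβ hx)
  rw [ENNReal.toReal_zero] at hlim
  refine squeeze_zero_norm' ?_ hlim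
  filter_upwards [self_mem_nhdsWithin] with r (hr : 0 < r)
  have hpos : 0 < r ^ (β + finrank ℝ E) := Real.rpow_pos_of_pos hr _
  rw [Function.comp_apply, ENNReal.toReal_div, ENNReal.toReal_ofReal hpos.le, norm_smul,
    Real.norm_of_nonneg (by positivity), one_div, inv_mul_eq_div]
  gcongr
  refine (norm_integral_le_lintegral_norm _).trans_eq ?_
  congr 1
  refine lintegral_congr fun y => ?_
  rw [norm_smul, Real.norm_of_nonneg (by positivity), ENNReal.ofReal_mul (by positivity),
    ofReal_norm, dist_eq_norm]

end AddHaar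

/-- Weighted Lebesgue differentiation: for bounded measurable `g` and `β > -d`, for a.e. `x`,
`(1/r^(β+d)) ∫_{B(x,r)} ‖x-y‖^β g(y) dy → (d κ_d/(β+d)) g(x)` as `r → 0⁺`. -/
theorem stmt0 (d : ℕ) (hd : 1 ≤ d) (g : EuclideanSpace ℝ (Fin d) → ℝ)
    (hg : Measurable g) (C : ℝ) (hC : ∀ y, |g y| ≤ C)
    (β : ℝ) (hβ : -(d : ℝ) < β)
    (κ : ℝ) (hκ : κ = (volume (closedBall (0 : EuclideanSpace ℝ (Fin d)) 1)).toReal) :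
    ∀ᵐ x : EuclideanSpace ℝ (Fin d), Tendsto
      (fun r : ℝ => (1 / r ^ (β + (d : ℝ))) * ∫ y in closedBall x r, ‖x - y‖ ^ β * g y)
      (nhdsWithin 0 (Ioi 0)) (nhds (((d : ℝ) * κ / (β + (d : ℝ))) * g x)) := by
  have hdim : Module.finrank ℝ (EuclideanSpace ℝ (Fin d)) = d := finrank_euclideanSpace_fin
  have : Nontrivial (EuclideanSpace ℝ (Fin d)) :=
    Module.nontrivial_of_finrank_pos (R := ℝ) (by rw [hdim]; exact hd)
  have hβd : 0 < β + Module.finrank ℝ (EuclideanSpace ℝ (Fin d)) := by rw [hdim]; linarith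
  have hκ' : κ = volume.real (ball (0 : EuclideanSpace ℝ (Fin d)) 1) := by
    rw [hκ, Measure.addHaar_closedBall_eq_addHaar_ball, measureReal_def]
  have hbound : ∀ y, ‖g y‖ ≤ C := hC
  have hgloc : LocallyIntegrable g volume :=
    (memLp_top_of_bound hg.aestronglyMeasurable C (.of_forall hbound)).locallyIntegrable le_top
  filter_upwards [ae_tendsto_smul_integral_closedBall_norm_sub_rpow_smul_sub volume
    hgloc hβd] with x hx
  have hsplit : ∀ r > 0, (1 / r ^ (β + (d : ℝ))) * ∫ y in closedBall x r, ‖x - y‖ ^ β * g y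
      = (d * κ / (β + d)) * g x + (1 / r ^ (β + (d : ℝ))) •
        ∫ y in closedBall x r, ‖x - y‖ ^ β • (g y - g x) := by
    intro r hr
    have hw := integrableOn_closedBall_norm_sub_rpow volume x hβd r
    simp only [smul_eq_mul, mul_sub]
    rw [integral_sub (hw.mul_bdd hg.aestronglyMeasurable (.of_forall hbound))
      (hw.mul_const _), integral_mul_const, integral_closedBall_norm_sub_rpow volume x hβd hr,
      hdim, ← hκ']
    field_simp
    ring
  rw [hdim] at hx
  have hlim := (tendsto_const_nhds (x := (d * κ / (β + d)) * g x)).add hx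
  rw [add_zero] at hlim
  refine hlim.congr' ?_
  filter_upwards [self_mem_nhdsWithin] with r hr
  exact (hsplit r hr).symm
end

section
/- Let W ⊂ ℝ^d be measurable with Vol(W) = 1, let f ∈ L^2(W) be a probability density on W, let β > -d, and let (r_n) be a positive sequence with r_n → 0. Then lim_{n→∞} r_n^{-(β+d)} ∫_{W×W} 1{‖x-y‖ ≤ r_n} ‖x-y‖^β f(x) f(y) d(x,y) = (d·κ_d/(β+d)) ∫_W f(x)^2 dx. -/
/-!
Substituting `y = x + z`, the double integral becomes `∫_{‖z‖ ≤ r} ‖z‖^β A(z) dz`, where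
`A(z) = ∫ f(x) f(x + z) dx` is the autocorrelation of `f`. Writing `A(z) = ⟪f, f(· + z)⟫` in `L²`,
continuity of translation in `L²` makes `A` continuous, with `|A| ≤ A(0) = ∫ f²`. In polar
coordinates `∫_{‖z‖ ≤ r} ‖z‖^β dz = d κ_d r^(β+d) / (β + d)`, and since `A` is within `ε` of `A(0)`
on small balls, `r^-(β+d) ∫_{‖z‖ ≤ r} ‖z‖^β A(z) dz → d κ_d A(0) / (β + d)`.
-/

open MeasureTheory Filter Metric Set
open scoped ENNReal Topology

theorem isLittleO_setIntegral_closedBall_mul_sub {X : Type*} [PseudoMetricSpace X]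
    [MeasurableSpace X] [OpensMeasurableSpace X] {μ : Measure X} {w A : X → ℝ} {x : X}
    (hw : ∀ z, 0 ≤ w z) (hwi : ∀ R, IntegrableOn w (closedBall x R) μ)
    (hAi : ∀ R, IntegrableOn (fun z => w z * A z) (closedBall x R) μ) (hA : ContinuousAt A x) :
    (fun R => ∫ z in closedBall x R, w z * A z ∂μ - A x * ∫ z in closedBall x R, w z ∂μ)
      =o[𝓝 0] fun R => ∫ z in closedBall x R, w z ∂μ := by
  refine .of_bound fun ε hε => ?_
  obtain ⟨δ, hδ, hAδ⟩ := Metric.continuousAt_iff.1 hA ε hε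
  filter_upwards [Iio_mem_nhds hδ] with R hR
  have hbound : ∀ z ∈ closedBall x R, ‖w z * (A z - A x)‖ ≤ ε * w z := fun z hz => by
    rw [norm_mul, Real.norm_of_nonneg (hw z), mul_comm]
    exact mul_le_mul_of_nonneg_right (hAδ (lt_of_le_of_lt hz hR)).le (hw z)
  calc ‖∫ z in closedBall x R, w z * A z ∂μ - A x * ∫ z in closedBall x R, w z ∂μ‖
      = ‖∫ z in closedBall x R, w z * (A z - A x) ∂μ‖ := by
        simp_rw [mul_sub]
        rw [integral_sub (hAi R) ((hwi R).mul_const _), integral_mul_const, mul_comm]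
    _ ≤ ∫ z in closedBall x R, ε * w z ∂μ :=
        norm_integral_le_of_norm_le ((hwi R).const_mul ε)
          (ae_restrict_of_forall_mem measurableSet_closedBall hbound)
    _ = ε * ‖∫ z in closedBall x R, w z ∂μ‖ := by
        rw [integral_const_mul, Real.norm_of_nonneg (integral_nonneg hw)]

namespace MeasureTheory

variable {E : Type*} [NormedAddCommGroup E] [MeasurableSpace E] {μ : Measure E} {f : E → ℝ}

noncomputable def autocorrelation (μ : Measure E) (f : E → ℝ) (z : E) : ℝ :=
  ∫ x, f x * f (x + z) ∂μ

theorem autocorrelation_zero : autocorrelation μ f 0 = ∫ x, f x ^ 2 ∂μ := by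
  simp [autocorrelation, sq]

variable [NormedSpace ℝ E] [FiniteDimensional ℝ E] [BorelSpace E] [μ.IsAddHaarMeasure]

theorem MemLp.autocorrelation_eq_inner (hf : MemLp f 2 μ) (z : E) :
    autocorrelation μ f z = inner ℝ (hf.toLp f) (DomAddAct.mk z +ᵥ hf.toLp f) := by
  rw [L2.inner_def]
  refine integral_congr_ae ?_
  have htr : (fun x => f (z + x)) =ᵐ[μ] fun x => hf.toLp f (z + x) :=
    (measurePreserving_add_left μ z).quasiMeasurePreserving.ae_eq_comp hf.coeFn_toLp.symm
  filter_upwards [hf.coeFn_toLp, DomAddAct.vadd_Lp_ae_eq (DomAddAct.mk z) (hf.toLp f), htr]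
    with x h₁ h₂ h₃
  rw [RCLike.inner_apply, conj_trivial, h₁, h₂, Equiv.symm_apply_apply, vadd_eq_add, ← h₃,
    add_comm, mul_comm]

theorem MemLp.continuous_autocorrelation (hf : MemLp f 2 μ) :
    Continuous (autocorrelation μ f) := by
  have : Fact ((2 : ℝ≥0∞) ≠ ∞) := ⟨ENNReal.ofNat_ne_top⟩
  simp_rw [funext hf.autocorrelation_eq_inner]
  exact continuous_const.inner (DomAddAct.continuous_mk.vadd continuous_const)

theorem MemLp.abs_autocorrelation_le (hf : MemLp f 2 μ) (z : E) :
    |autocorrelation μ f z| ≤ autocorrelation μ f 0 := by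
  rw [hf.autocorrelation_eq_inner, hf.autocorrelation_eq_inner, DomAddAct.mk_zero, zero_vadd,
    real_inner_self_eq_norm_mul_norm]
  calc _ ≤ ‖hf.toLp f‖ * ‖DomAddAct.mk z +ᵥ hf.toLp f‖ := abs_real_inner_le_norm _ _
    _ = _ := by rw [DomAddAct.norm_vadd_Lp]

theorem integrable_prod_mul_mul_add {K : E → ℝ} (hK_meas : Measurable K) (hK : Integrable K μ)
    (hf_meas : Measurable f) (hf : MemLp f 2 μ) :
    Integrable (fun q : E × E => K q.2 * (f q.1 * f (q.1 + q.2))) (μ.prod μ) := by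
  have hmeas : Measurable fun q : E × E => K q.2 * (f q.1 * f (q.1 + q.2)) := by fun_prop
  refine (integrable_prod_iff' hmeas.aestronglyMeasurable).2 ⟨.of_forall fun z => ?_, ?_⟩
  · exact (hf.integrable_mul
      (hf.comp_measurePreserving (measurePreserving_add_right μ z))).const_mul (K z)
  · have hnorm : ∀ z, ∫ x, ‖K z * (f x * f (x + z))‖ ∂μ = ‖K z‖ * autocorrelation μ (|f|) z := by
      intro z
      simp only [norm_mul, Real.norm_eq_abs, autocorrelation, Pi.abs_apply, integral_const_mul]
    simp_rw [hnorm]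
    exact hK.norm.mul_bdd hf.abs.continuous_autocorrelation.aestronglyMeasurable
      (.of_forall hf.abs.abs_autocorrelation_le)

theorem integral_prod_sub_mul_eq_integral_mul_autocorrelation {K : E → ℝ}
    (hK_meas : Measurable K) (hK : Integrable K μ) (hf_meas : Measurable f) (hf : MemLp f 2 μ) :
    ∫ p : E × E, K (p.2 - p.1) * (f p.1 * f p.2) ∂μ.prod μ =
      ∫ z, K z * autocorrelation μ f z ∂μ := by
  rw [← (measurePreserving_prod_add μ μ).integral_comp
      (MeasurableEquiv.shearAddRight E).measurableEmbedding]
  simp only [add_sub_cancel_left]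
  rw [integral_prod_symm _ (integrable_prod_mul_mul_add hK_meas hK hf_meas hf)]
  simp [autocorrelation, integral_const_mul]

local notation "dim" => Module.finrank ℝ

variable [Nontrivial E] {β : ℝ}

theorem integrableOn_closedBall_norm_rpow (hβ : -(dim E : ℝ) < β) (R : ℝ) :
    IntegrableOn (fun z : E => ‖z‖ ^ β) (closedBall 0 R) μ := by
  refine (integrableOn_ball_of_norm_le_rpow (μ := μ) Module.finrank_pos (C := 1) (α := -β)
    (r := R + 1) (by linarith) (.of_forall fun z => ?_)
    (measurable_norm.pow_const β).aestronglyMeasurable).mono_set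
    (closedBall_subset_ball (lt_add_one R))
  rw [neg_neg, one_mul, Real.norm_of_nonneg (by positivity)]

theorem setIntegral_closedBall_norm_rpow (hβ : -(dim E : ℝ) < β) {R : ℝ} (hR : 0 ≤ R) :
    ∫ z in closedBall 0 R, ‖z‖ ^ β ∂μ =
      dim E * μ.real (closedBall 0 1) / (β + dim E) * R ^ (β + dim E) := by
  have hindicator : (closedBall (0 : E) R).indicator (‖·‖ ^ β) =
      fun z => (Iic R).indicator (· ^ β) ‖z‖ := by
    ext z; simp [indicator]
  have hradial : ∫ y in Ioi (0 : ℝ), y ^ (dim E - 1) • (Iic R).indicator (· ^ β) y =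
      ∫ y in (0)..R, y ^ (β + dim E - 1) := by
    rw [intervalIntegral.integral_of_le hR, ← Ioi_inter_Iic,
      ← setIntegral_indicator measurableSet_Iic]
    refine setIntegral_congr_fun measurableSet_Ioi fun y (hy : 0 < y) => ?_
    by_cases hyR : y ∈ Iic R
    · rw [indicator_of_mem hyR, indicator_of_mem hyR, smul_eq_mul, ← Real.rpow_natCast,
        ← Real.rpow_add hy, Nat.cast_sub Module.finrank_pos, Nat.cast_one]
      ring_nf
    · rw [indicator_of_notMem hyR, indicator_of_notMem hyR, smul_zero]
  rw [← integral_indicator measurableSet_closedBall, hindicator, integral_fun_norm_addHaar,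
    hradial, integral_rpow (Or.inl (by linarith)),
    Measure.addHaar_real_closedBall_eq_addHaar_real_ball, sub_add_cancel,
    Real.zero_rpow (by linarith), nsmul_eq_mul, smul_eq_mul]
  ring

theorem tendsto_setIntegral_closedBall_norm_rpow_mul_div (hβ : -(dim E : ℝ) < β) {A : E → ℝ}
    (hA : Continuous A) :
    Tendsto (fun R => (∫ z in closedBall 0 R, ‖z‖ ^ β * A z ∂μ) / R ^ (β + dim E))
      (𝓝[>] 0) (𝓝 (dim E * μ.real (closedBall 0 1) / (β + dim E) * A 0)) := by
  set c := dim E * μ.real (closedBall (0 : E) 1) / (β + dim E)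
  have hball : (fun R => ∫ z in closedBall 0 R, ‖z‖ ^ β ∂μ) =ᶠ[𝓝[>] 0]
      fun R => c * R ^ (β + dim E) :=
    eventually_nhdsWithin_of_forall fun R hR => setIntegral_closedBall_norm_rpow hβ (le_of_lt hR)
  have ho := isLittleO_setIntegral_closedBall_mul_sub (μ := μ) (fun z => by positivity)
    (integrableOn_closedBall_norm_rpow hβ)
    (fun R => (integrableOn_closedBall_norm_rpow hβ R).mul_continuousOn hA.continuousOn
      (isCompact_closedBall 0 R)) hA.continuousAt
  have hbigO : (fun R => ∫ z in closedBall 0 R, ‖z‖ ^ β ∂μ) =O[𝓝[>] 0] (· ^ (β + dim E)) :=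
    ((Asymptotics.isBigO_refl _ _).const_mul_left c).congr' hball.symm .rfl
  have ho' := (ho.mono nhdsWithin_le_nhds).trans_isBigO hbigO
  rw [← zero_add (c * A 0)]
  refine (ho'.tendsto_div_nhds_zero.add_const (c * A 0)).congr' ?_
  filter_upwards [hball, self_mem_nhdsWithin] with R hR (hpos : 0 < R)
  rw [hR]
  field_simp
  ring

theorem integral_prod_ite_norm_sub_le_eq_setIntegral_autocorrelation (hβ : -(dim E : ℝ) < β)
    (hf_meas : Measurable f) (hf : MemLp f 2 μ) (R : ℝ) :
    ∫ p : E × E, (if ‖p.1 - p.2‖ ≤ R then ‖p.1 - p.2‖ ^ β * f p.1 * f p.2 else 0) ∂μ.prod μ =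
      ∫ z in closedBall 0 R, ‖z‖ ^ β * autocorrelation μ f z ∂μ := by
  have hkernel := integral_prod_sub_mul_eq_integral_mul_autocorrelation
    ((measurable_norm.pow_const β).indicator measurableSet_closedBall)
    ((integrableOn_closedBall_norm_rpow hβ R).integrable_indicator measurableSet_closedBall)
    hf_meas hf
  simp only [← indicator_mul_left, integral_indicator measurableSet_closedBall] at hkernel
  rw [← hkernel]
  congr 1 with p
  rw [norm_sub_rev]
  by_cases h : ‖p.2 - p.1‖ ≤ R
  · simp [h, mul_assoc]
  · simp [h]

end MeasureTheory

theorem stmt8_general (d : ℕ) (hd : 1 ≤ d) (W : Set (EuclideanSpace ℝ (Fin d)))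
    (f : EuclideanSpace ℝ (Fin d) → ℝ) (hf : Measurable f)
    (hsupp : ∀ x ∉ W, f x = 0)
    (hf2 : IntegrableOn (fun x => f x ^ 2) W)
    (β : ℝ) (hβ : -(d:ℝ) < β)
    (r : ℕ → ℝ) (hrpos : ∀ n, 0 < r n) (hr0 : Tendsto r atTop (nhds 0))
    (κ : ℝ) (hκ : κ = (volume (closedBall (0 : EuclideanSpace ℝ (Fin d)) 1)).toReal) :
    Tendsto (fun n =>
        (∫ p in W ×ˢ W,
          if ‖p.1 - p.2‖ ≤ r n then ‖p.1 - p.2‖ ^ β * f p.1 * f p.2 else 0)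
          / r n ^ (β + (d : ℝ)))
      atTop (nhds (((d : ℝ) * κ / (β + (d : ℝ))) * ∫ x in W, f x ^ 2)) := by
  have : Nontrivial (EuclideanSpace ℝ (Fin d)) :=
    Module.nontrivial_of_finrank_pos (R := ℝ) (by rw [finrank_euclideanSpace_fin]; exact hd)
  have hsq_supp : ∀ x ∉ W, f x ^ 2 = 0 := fun x hx => by simp [hsupp x hx]
  have hfL2 : MemLp f 2 volume := (memLp_two_iff_integrable_sq hf.aestronglyMeasurable).2
    ((integrableOn_iff_integrable_of_support_subset (Function.support_subset_iff'.2 hsq_supp)).1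
      hf2)
  have hpair : ∀ R, ∫ p in W ×ˢ W,
      (if ‖p.1 - p.2‖ ≤ R then ‖p.1 - p.2‖ ^ β * f p.1 * f p.2 else 0) =
      ∫ z in closedBall 0 R, ‖z‖ ^ β * autocorrelation volume f z := fun R => by
    rw [setIntegral_eq_integral_of_forall_compl_eq_zero, Measure.volume_eq_prod,
      integral_prod_ite_norm_sub_le_eq_setIntegral_autocorrelation (by simpa using hβ) hf hfL2]
    intro p hp
    rcases not_and_or.1 (mem_prod.not.1 hp) with h | h <;> simp [hsupp _ h]
  have hlim := (tendsto_setIntegral_closedBall_norm_rpow_mul_div (μ := volume) (by simpa using hβ)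
    hfL2.continuous_autocorrelation).comp (tendsto_nhdsWithin_iff.2 ⟨hr0, .of_forall hrpos⟩)
  rw [setIntegral_eq_integral_of_forall_compl_eq_zero hsq_supp]
  simp only [finrank_euclideanSpace_fin, measureReal_def, ← hκ, autocorrelation_zero] at hlim
  simpa only [hpair, Function.comp_def] using hlim

/-- Asymptotic mean: for a density `f ∈ L²(W)` on `W` with `Vol(W) = 1` and radii `r_n → 0`,
`r_n^{-(β+d)} ∫_{W×W} 1{‖x-y‖≤r_n} ‖x-y‖^β f(x)f(y) d(x,y) → (d κ_d/(β+d)) ∫_W f²`. -/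
theorem stmt8 (d : ℕ) (hd : 1 ≤ d) (W : Set (EuclideanSpace ℝ (Fin d))) (hW : MeasurableSet W)
    (hvol : volume W = 1)
    (f : EuclideanSpace ℝ (Fin d) → ℝ) (hf : Measurable f) (hf0 : ∀ x, 0 ≤ f x)
    (hsupp : ∀ x ∉ W, f x = 0)
    (hf1 : IntegrableOn f W) (hprob : ∫ x in W, f x = 1)
    (hf2 : IntegrableOn (fun x => f x ^ 2) W)
    (β : ℝ) (hβ : -(d:ℝ) < β)
    (r : ℕ → ℝ) (hrpos : ∀ n, 0 < r n) (hr0 : Tendsto r atTop (nhds 0))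
    (κ : ℝ) (hκ : κ = (volume (closedBall (0 : EuclideanSpace ℝ (Fin d)) 1)).toReal) :
    Tendsto (fun n =>
        (∫ p in W ×ˢ W,
          if ‖p.1 - p.2‖ ≤ r n then ‖p.1 - p.2‖ ^ β * f p.1 * f p.2 else 0)
          / r n ^ (β + (d : ℝ)))
      atTop (nhds (((d : ℝ) * κ / (β + (d : ℝ))) * ∫ x in W, f x ^ 2)) :=
  stmt8_general d hd W f hf hsupp hf2 β hβ r hrpos hr0 κ hκ
end

section
/- Let W ⊂ ℝ^d be measurable, β > -d/2, r > 0, and f : W → [0,∞) measurable. Then ∫_W (∫_W 1{‖x-y‖ ≤ r} ‖x-y‖^β f(y) dy)^2 f(x) dx ≤ (d·κ_d/(β+d))^2 · r^{2β+2d} · ∫_W f(x)^3 dx. -/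
/-!
The kernel `k(x, y) = 1{‖x - y‖ ≤ r} ‖x - y‖^β` has mass `C = ∫ k(x, ·) = d κ_d r^{β+d} / (β+d)`
for every `x` (polar coordinates). Expanding the square, the left side is
`∫∫∫ k(x,y) k(x,z) f(x) f(y) f(z)`, and AM-GM bounds `f(x) f(y) f(z)` by the mean of the cubes.
The `f(x)³` term contributes at most `C² ∫ f³`; by the symmetry of `k`, so do the `f(y)³` and
`f(z)³` terms, via `∫∫ k(x,y) f(y)³ dy dx ≤ C ∫ f³`.
-/

open MeasureTheory Metric Set
open scoped ENNReal

theorem ENNReal.three_mul_mul_mul_le_add_pow_three (a b c : ℝ≥0∞) :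
    3 * (a * b * c) ≤ a ^ 3 + b ^ 3 + c ^ 3 := by
  rcases eq_top_or_lt_top a with rfl | ha
  · simp
  rcases eq_top_or_lt_top b with rfl | hb
  · simp
  rcases eq_top_or_lt_top c with rfl | hc
  · simp
  lift a to NNReal using ha.ne
  lift b to NNReal using hb.ne
  lift c to NNReal using hc.ne
  norm_cast
  rw [← NNReal.coe_le_coe]
  push_cast
  nlinarith [mul_nonneg (add_nonneg (add_nonneg a.2 b.2) c.2)
    (add_nonneg (add_nonneg (sq_nonneg ((a : ℝ) - b)) (sq_nonneg ((b : ℝ) - c)))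
      (sq_nonneg ((a : ℝ) - c)))]

theorem lintegral_Ioc_rpow {s r : ℝ} (hs : -1 < s) (hr : 0 ≤ r) :
    ∫⁻ y in Ioc 0 r, ENNReal.ofReal (y ^ s) = ENNReal.ofReal (r ^ (s + 1) / (s + 1)) := by
  rw [← ofReal_integral_eq_lintegral_ofReal
      (intervalIntegral.intervalIntegrable_rpow' hs).1 ?_,
    ← intervalIntegral.integral_of_le hr, integral_rpow (Or.inl hs),
    Real.zero_rpow (by linarith), sub_zero]
  filter_upwards [ae_restrict_mem measurableSet_Ioc] with y hy
  exact Real.rpow_nonneg hy.1.le _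

section AddHaar

variable {E : Type*} [NormedAddCommGroup E] [NormedSpace ℝ E] [FiniteDimensional ℝ E]
  [MeasurableSpace E] [BorelSpace E] [Nontrivial E] (μ : Measure E) [μ.IsAddHaarMeasure]

theorem lintegral_fun_norm_addHaar {f : ℝ → ℝ≥0∞} (hf : Measurable f) :
    ∫⁻ x, f ‖x‖ ∂μ = Module.finrank ℝ E * μ (ball 0 1) *
      ∫⁻ y in Ioi (0 : ℝ), ENNReal.ofReal (y ^ (Module.finrank ℝ E - 1)) * f y := by
  have hf_snd : Measurable fun p : sphere (0 : E) 1 × Ioi (0 : ℝ) => f p.2 := by fun_prop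
  calc ∫⁻ x, f ‖x‖ ∂μ
      = ∫⁻ x : ({0}ᶜ : Set E), f ‖x.1‖ ∂μ.comap Subtype.val := by
        rw [lintegral_subtype_comap (measurableSet_singleton 0).compl (fun x : E => f ‖x‖),
          restrict_compl_singleton]
    _ = ∫⁻ p, f p.2 ∂μ.toSphere.prod (.volumeIoiPow (Module.finrank ℝ E - 1)) := by
        rw [← μ.measurePreserving_homeomorphUnitSphereProd.lintegral_comp hf_snd]
        simp
    _ = μ.toSphere univ * ∫⁻ y, f y ∂.volumeIoiPow (Module.finrank ℝ E - 1) := by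
        rw [lintegral_prod _ hf_snd.aemeasurable]
        simp [lintegral_const, mul_comm]
    _ = _ := by
        rw [Measure.toSphere_apply_univ, Measure.volumeIoiPow,
          lintegral_withDensity_eq_lintegral_mul _ (by fun_prop) (by fun_prop),
          ← lintegral_subtype_comap measurableSet_Ioi]
        rfl

theorem lintegral_rpow_norm_truncated {β r : ℝ} (hβ : 0 < β + Module.finrank ℝ E)
    (hr : 0 < r) :
    ∫⁻ x, ENNReal.ofReal (if ‖x‖ ≤ r then ‖x‖ ^ β else 0) ∂μ =
      ENNReal.ofReal (Module.finrank ℝ E * μ.real (closedBall 0 1) /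
        (β + Module.finrank ℝ E) * r ^ (β + Module.finrank ℝ E)) := by
  set n := Module.finrank ℝ E
  have hn : 1 ≤ n := Module.finrank_pos
  have hf : Measurable fun t : ℝ => ENNReal.ofReal (if t ≤ r then t ^ β else 0) :=
    (Measurable.ite measurableSet_Iic (measurable_id.pow_const β) measurable_const).ennreal_ofReal
  have hradial : ∀ y ∈ Ioi (0 : ℝ),
      ENNReal.ofReal (y ^ (n - 1)) * ENNReal.ofReal (if y ≤ r then y ^ β else 0) =
        (Iic r).indicator (fun y => ENNReal.ofReal (y ^ (β + n - 1))) y := by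
    intro y (hy : 0 < y)
    by_cases hyr : y ≤ r
    · rw [if_pos hyr, indicator_of_mem (show y ∈ Iic r from hyr),
        ← ENNReal.ofReal_mul (by positivity), ← Real.rpow_natCast, ← Real.rpow_add hy,
        Nat.cast_sub hn]
      ring_nf
    · simp [hyr]
  rw [lintegral_fun_norm_addHaar μ hf, setLIntegral_congr_fun measurableSet_Ioi hradial,
    lintegral_indicator measurableSet_Iic, Measure.restrict_restrict measurableSet_Iic,
    inter_comm, Ioi_inter_Iic, lintegral_Ioc_rpow (by linarith) hr.le, sub_add_cancel,
    ← Measure.addHaar_closedBall_eq_addHaar_ball,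
    ← ofReal_measureReal measure_closedBall_lt_top.ne, ← ENNReal.ofReal_natCast,
    ← ENNReal.ofReal_mul (by positivity), ← ENNReal.ofReal_mul (by positivity)]
  congr 1
  ring

end AddHaar

section SymmetricKernel

variable {α : Type*} [MeasurableSpace α]

theorem three_mul_sq_lintegral_mul_le (ν : Measure α) [SFinite ν] {g : α → ℝ≥0∞}
    (hg : Measurable g) (t : ℝ≥0∞) :
    3 * ((∫⁻ y, g y ∂ν) ^ 2 * t) ≤
      ν univ ^ 2 * t ^ 3 + 2 * (ν univ * ∫⁻ y, g y ^ 3 ∂ν) :=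
  calc 3 * ((∫⁻ y, g y ∂ν) ^ 2 * t)
      = ∫⁻ y, ∫⁻ z, 3 * (t * g y * g z) ∂ν ∂ν := by
        simp_rw [show ∀ y z, 3 * (t * g y * g z) = 3 * t * g y * g z from fun _ _ => by ring]
        rw [lintegral_lintegral_mul (by fun_prop) hg.aemeasurable, lintegral_const_mul _ hg]
        ring
    _ ≤ ∫⁻ y, ∫⁻ z, t ^ 3 + g y ^ 3 + g z ^ 3 ∂ν ∂ν := by
        gcongr with y z
        exact ENNReal.three_mul_mul_mul_le_add_pow_three _ _ _
    _ = ν univ ^ 2 * t ^ 3 + 2 * (ν univ * ∫⁻ y, g y ^ 3 ∂ν) := by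
        have hg3 : Measurable fun y => g y ^ 3 := hg.pow_const 3
        simp only [lintegral_add_right _ hg3, lintegral_const, lintegral_add_left measurable_const,
          lintegral_add_right _ measurable_const, lintegral_mul_const _ hg3]
        ring

variable {μ : Measure α} [SFinite μ] {k : α → α → ℝ≥0∞} {C : ℝ≥0∞}

theorem lintegral_lintegral_mul_le_of_symm (hk : Measurable (Function.uncurry k))
    (hk_symm : ∀ x y, k x y = k y x) (hC : ∀ x, ∫⁻ y, k x y ∂μ ≤ C)
    {h : α → ℝ≥0∞} (hh : Measurable h) :
    ∫⁻ x, ∫⁻ y, k x y * h y ∂μ ∂μ ≤ C * ∫⁻ y, h y ∂μ :=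
  calc ∫⁻ x, ∫⁻ y, k x y * h y ∂μ ∂μ
      = ∫⁻ y, (∫⁻ x, k y x ∂μ) * h y ∂μ := by
        rw [lintegral_lintegral_swap (hk.mul (hh.comp measurable_snd)).aemeasurable]
        refine lintegral_congr fun y => ?_
        simp_rw [hk_symm _ y]
        exact lintegral_mul_const _ (hk.comp measurable_prodMk_left)
    _ ≤ ∫⁻ y, C * h y ∂μ := by gcongr with y; exact hC y
    _ = C * ∫⁻ y, h y ∂μ := lintegral_const_mul _ hh

theorem lintegral_sq_lintegral_mul_le (hk : Measurable (Function.uncurry k))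
    (hk_symm : ∀ x y, k x y = k y x) (hC : ∀ x, ∫⁻ y, k x y ∂μ ≤ C)
    {g : α → ℝ≥0∞} (hg : Measurable g) :
    ∫⁻ x, (∫⁻ y, k x y * g y ∂μ) ^ 2 * g x ∂μ ≤ C ^ 2 * ∫⁻ x, g x ^ 3 ∂μ := by
  have hkx : ∀ x, Measurable (k x) := fun x => hk.comp measurable_prodMk_left
  have hg3 : Measurable fun y => g y ^ 3 := hg.pow_const 3
  have hpoint : ∀ x, 3 * ((∫⁻ y, k x y * g y ∂μ) ^ 2 * g x)
      ≤ C ^ 2 * g x ^ 3 + 2 * (C * ∫⁻ y, k x y * g y ^ 3 ∂μ) := by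
    intro x
    have := three_mul_sq_lintegral_mul_le (μ.withDensity (k x)) hg (g x)
    rw [withDensity_apply _ MeasurableSet.univ, Measure.restrict_univ,
      lintegral_withDensity_eq_lintegral_mul _ (hkx x) hg,
      lintegral_withDensity_eq_lintegral_mul _ (hkx x) hg3] at this
    simp only [Pi.mul_apply] at this
    refine this.trans ?_
    gcongr <;> exact hC x
  have hm : Measurable fun x => ∫⁻ y, k x y * g y ^ 3 ∂μ :=
    (hk.mul (hg3.comp measurable_snd)).lintegral_prod_right'
  rw [← ENNReal.mul_le_mul_iff_right three_ne_zero ENNReal.ofNat_ne_top,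
    ← lintegral_const_mul' _ _ ENNReal.ofNat_ne_top]
  calc ∫⁻ x, 3 * ((∫⁻ y, k x y * g y ∂μ) ^ 2 * g x) ∂μ
      ≤ ∫⁻ x, C ^ 2 * g x ^ 3 + 2 * (C * ∫⁻ y, k x y * g y ^ 3 ∂μ) ∂μ :=
        lintegral_mono hpoint
    _ = C ^ 2 * ∫⁻ x, g x ^ 3 ∂μ + 2 * (C * ∫⁻ x, ∫⁻ y, k x y * g y ^ 3 ∂μ ∂μ) := by
        rw [lintegral_add_left (by fun_prop), lintegral_const_mul _ hg3,
          lintegral_const_mul _ (hm.const_mul C), lintegral_const_mul _ hm]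
    _ ≤ C ^ 2 * ∫⁻ x, g x ^ 3 ∂μ + 2 * (C * (C * ∫⁻ y, g y ^ 3 ∂μ)) := by
        gcongr
        exact lintegral_lintegral_mul_le_of_symm hk hk_symm hC hg3
    _ = 3 * (C ^ 2 * ∫⁻ x, g x ^ 3 ∂μ) := by ring

end SymmetricKernel

theorem stmt9_general (d : ℕ) (hd : 1 ≤ d) (W : Set (EuclideanSpace ℝ (Fin d)))
    (β : ℝ) (hβ : -(d:ℝ)/2 < β) (r : ℝ) (hr : 0 < r)
    (f : EuclideanSpace ℝ (Fin d) → ℝ) (hf : Measurable f) (hf0 : ∀ x, 0 ≤ f x)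
    (κ : ℝ) (hκ : κ = (volume (closedBall (0 : EuclideanSpace ℝ (Fin d)) 1)).toReal) :
    ∫⁻ x in W,
        (∫⁻ y in W,
          ENNReal.ofReal (if ‖x - y‖ ≤ r then ‖x - y‖ ^ β * f y else 0)) ^ 2
          * ENNReal.ofReal (f x)
      ≤ ENNReal.ofReal (((d : ℝ) * κ / (β + (d : ℝ))) ^ 2 * r ^ (2 * β + 2 * (d : ℝ)))
        * ∫⁻ x in W, ENNReal.ofReal (f x ^ 3) := by
  have : Nontrivial (EuclideanSpace ℝ (Fin d)) :=
    Module.nontrivial_of_finrank_pos (R := ℝ) (by rw [finrank_euclideanSpace_fin]; omega)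
  have hβd : 0 < β + d := by linarith
  have hκ0 : 0 ≤ κ := hκ ▸ ENNReal.toReal_nonneg
  let F : EuclideanSpace ℝ (Fin d) → ℝ≥0∞ := fun z =>
    ENNReal.ofReal (if ‖z‖ ≤ r then ‖z‖ ^ β else 0)
  let C := ENNReal.ofReal ((d : ℝ) * κ / (β + d) * r ^ (β + d))
  have hF : Measurable F :=
    (Measurable.ite (measurableSet_le measurable_norm measurable_const)
      (measurable_norm.pow_const β) measurable_const).ennreal_ofReal
  have hF_mass : ∫⁻ z, F z = C := by
    rw [lintegral_rpow_norm_truncated _ (by rwa [finrank_euclideanSpace_fin]) hr,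
      finrank_euclideanSpace_fin, measureReal_def, ← hκ]
  have hC : ∀ x, ∫⁻ y in W, F (x - y) ≤ C := fun x =>
    (setLIntegral_le_lintegral _ _).trans
      (lintegral_sub_left_eq_self (μ := volume) F x ▸ hF_mass).le
  calc _ = ∫⁻ x in W,
          (∫⁻ y in W, F (x - y) * ENNReal.ofReal (f y)) ^ 2 * ENNReal.ofReal (f x) := by
        refine lintegral_congr fun x => ?_
        congr 2
        refine lintegral_congr fun y => ?_
        split_ifs with hxy
        · simp [F, hxy, ENNReal.ofReal_mul (Real.rpow_nonneg (norm_nonneg _) _)]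
        · simp [F, hxy]
    _ ≤ C ^ 2 * ∫⁻ x in W, ENNReal.ofReal (f x) ^ 3 :=
        lintegral_sq_lintegral_mul_le (k := fun x y => F (x - y))
          (hF.comp (measurable_fst.sub measurable_snd)) (fun x y => by simp only [F, norm_sub_rev])
          hC hf.ennreal_ofReal
    _ = _ := by
        simp_rw [C, ← ENNReal.ofReal_pow (hf0 _)]
        rw [← ENNReal.ofReal_pow (by positivity), mul_pow, ← Real.rpow_natCast (r ^ _),
          ← Real.rpow_mul hr.le]
        push_cast
        ring_nf

/-- For measurable `f ≥ 0` on `W`, `β > -d/2`, `r > 0`: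
`∫_W (∫_W 1{‖x-y‖≤r}‖x-y‖^β f(y) dy)² f(x) dx ≤ (d κ_d/(β+d))² r^{2β+2d} ∫_W f³`. -/
theorem stmt9 (d : ℕ) (hd : 1 ≤ d) (W : Set (EuclideanSpace ℝ (Fin d))) (hW : MeasurableSet W)
    (β : ℝ) (hβ : -(d:ℝ)/2 < β) (r : ℝ) (hr : 0 < r)
    (f : EuclideanSpace ℝ (Fin d) → ℝ) (hf : Measurable f) (hf0 : ∀ x, 0 ≤ f x)
    (κ : ℝ) (hκ : κ = (volume (closedBall (0 : EuclideanSpace ℝ (Fin d)) 1)).toReal) :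
    ∫⁻ x in W,
        (∫⁻ y in W,
          ENNReal.ofReal (if ‖x - y‖ ≤ r then ‖x - y‖ ^ β * f y else 0)) ^ 2
          * ENNReal.ofReal (f x)
      ≤ ENNReal.ofReal (((d : ℝ) * κ / (β + (d : ℝ))) ^ 2 * r ^ (2 * β + 2 * (d : ℝ)))
        * ∫⁻ x in W, ENNReal.ofReal (f x ^ 3) :=
  stmt9_general d hd W β hβ r hr f hf hf0 κ hκ
end

section
/- For d = 2, W = [0,1]^2, 0 < r ≤ 1, and β > -2, one has ∫_{W×W} 1{‖x-y‖ ≤ r} ‖x-y‖^β d(x,y) = (2π/(β+2)) r^{β+2} - (8/(β+3)) r^{β+3} + (2/(β+4)) r^{β+4}. -/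
/-!
Substituting `z = x - y` turns the integral into `∫ φ(‖z‖) γ(z) dz`, where `φ(t) = 1{t ≤ r} t^β`
and `γ(z) = vol(W ∩ (W - z))` is the set covariance of `W`. For the unit square
`γ(z) = (1 - |z₁|)₊ (1 - |z₂|)₊`, and on the support `‖z‖ ≤ r ≤ 1` of `φ` the truncations are
inactive. In polar coordinates `z = s e^{iθ}` the angular integral of
`(1 - s|cos θ|)(1 - s|sin θ|)` is `2π - 8s + 2s²` (four quarter-turns, each contributing
`π/2 - 2s + s²/2`), and integrating `s^{β+1}(2π - 8s + 2s²)` over `(0, r]` gives the formula;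
`β > -2` is what makes this radial integral converge.
-/

open MeasureTheory Set Real
open scoped ENNReal

noncomputable def setCovariance {G : Type*} [MeasurableSpace G] [Add G] (μ : Measure G)
    (W : Set G) (z : G) : ℝ≥0∞ :=
  μ (W ∩ (z + ·) ⁻¹' W)

theorem setLIntegral_prod_comp_sub_eq_lintegral_mul_setCovariance {G : Type*}
    [MeasurableSpace G] [AddGroup G] [MeasurableAdd₂ G] [MeasurableNeg G]
    (μ : Measure G) [SFinite μ] [μ.IsAddRightInvariant]
    {W : Set G} (hW : MeasurableSet W) {g : G → ℝ≥0∞} (hg : Measurable g) :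
    ∫⁻ p in W ×ˢ W, g (p.1 - p.2) ∂μ.prod μ = ∫⁻ z, g z * setCovariance μ W z ∂μ := by
  set F : G × G → ℝ≥0∞ := fun q => g q.1 * (W.indicator 1 (q.1 + q.2) * W.indicator 1 q.2)
  have hF : Measurable F := (hg.comp measurable_fst).mul
    (((measurable_one.indicator hW).comp measurable_add).mul
      ((measurable_one.indicator hW).comp measurable_snd))
  calc ∫⁻ p in W ×ˢ W, g (p.1 - p.2) ∂μ.prod μ
      = ∫⁻ p, F (p.1 - p.2, p.2) ∂μ.prod μ := by
        rw [← lintegral_indicator (hW.prod hW)]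
        refine lintegral_congr fun p => ?_
        by_cases h1 : p.1 ∈ W <;> by_cases h2 : p.2 ∈ W <;> simp [F, h1, h2]
    _ = ∫⁻ z, ∫⁻ y, F (z, y) ∂μ ∂μ := by
        rw [(measurePreserving_sub_prod μ μ).lintegral_comp hF, lintegral_prod _ hF.aemeasurable]
    _ = ∫⁻ z, g z * setCovariance μ W z ∂μ := by
        refine lintegral_congr fun z => ?_
        simp only [F]
        rw [lintegral_const_mul _ (by fun_prop), setCovariance, ← lintegral_indicator_one
          (hW.inter (measurable_const_add z hW)), inter_comm, inter_indicator_one]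
        rfl

theorem setCovariance_Icc_zero_one (t : ℝ) :
    setCovariance volume (Icc (0 : ℝ) 1) t = ENNReal.ofReal (1 - |t|) := by
  rw [setCovariance, preimage_const_add_Icc, zero_sub, Icc_inter_Icc, Real.volume_Icc]
  congr 1
  rcases le_total 0 t with ht | ht
  · rw [abs_of_nonneg ht, max_eq_left (by linarith), min_eq_right (by linarith)]; ring
  · rw [abs_of_nonpos ht, max_eq_right (by linarith), min_eq_left (by linarith)]

theorem setCovariance_unitCube {ι : Type*} [Fintype ι] (z : EuclideanSpace ℝ ι) :
    setCovariance volume {x : EuclideanSpace ℝ ι | ∀ i, x i ∈ Icc (0 : ℝ) 1} z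
      = ∏ i, ENNReal.ofReal (1 - |z i|) := by
  have hset : {x : EuclideanSpace ℝ ι | ∀ i, x i ∈ Icc (0 : ℝ) 1} ∩
      (z + ·) ⁻¹' {x | ∀ i, x i ∈ Icc (0 : ℝ) 1}
      = WithLp.ofLp ⁻¹' univ.pi fun i => Icc (0 : ℝ) 1 ∩ (z i + ·) ⁻¹' Icc 0 1 := by
    ext x
    simp only [mem_inter_iff, mem_preimage, mem_ofPred_eq, mem_univ_pi, PiLp.add_apply, forall_and]
  rw [setCovariance, hset, (PiLp.volume_preserving_ofLp ι).measure_preimage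
    (MeasurableSet.univ_pi fun i => measurableSet_Icc.inter
      (measurable_const_add _ measurableSet_Icc)).nullMeasurableSet, volume_pi_pi]
  exact Finset.prod_congr rfl fun i _ => setCovariance_Icc_zero_one (z i)

theorem integral_neg_pi_pi_eq_four_mul {f : ℝ → ℝ} (hf : Continuous f)
    (hneg : ∀ θ, f (-θ) = f θ) (hpi : ∀ θ, f (π - θ) = f θ) :
    ∫ θ in -π..π, f θ = 4 * ∫ θ in 0..π / 2, f θ := by
  have hi : ∀ a b, IntervalIntegrable f volume a b := hf.intervalIntegrable
  have hleft : ∫ θ in -π..0, f θ = ∫ θ in 0..π, f θ := by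
    simpa [hneg] using (intervalIntegral.integral_comp_neg (a := 0) (b := π) f).symm
  have hright : ∫ θ in π / 2..π, f θ = ∫ θ in 0..π / 2, f θ := by
    have := intervalIntegral.integral_comp_sub_left (a := 0) (b := π / 2) f π
    simp only [hpi, sub_zero] at this
    rw [this, show π - π / 2 = π / 2 by ring]
  rw [← intervalIntegral.integral_add_adjacent_intervals (hi _ 0) (hi 0 _), hleft,
    ← intervalIntegral.integral_add_adjacent_intervals (hi 0 (π / 2)) (hi _ π), hright]
  ring

theorem integral_one_sub_mul_abs_cos_mul_one_sub_mul_abs_sin (s : ℝ) :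
    ∫ θ in -π..π, (1 - s * |cos θ|) * (1 - s * |sin θ|) = 2 * π - 8 * s + 2 * s ^ 2 := by
  rw [integral_neg_pi_pi_eq_four_mul (by fun_prop) (by simp) (by simp [cos_pi_sub, sin_pi_sub])]
  have hquarter : ∫ θ in 0..π / 2, (1 - s * |cos θ|) * (1 - s * |sin θ|)
      = ∫ θ in 0..π / 2, (1 - s * cos θ - s * sin θ + s ^ 2 * (sin θ * cos θ)) := by
    refine intervalIntegral.integral_congr fun θ hθ => ?_
    rw [uIcc_of_le (by positivity)] at hθ
    rw [abs_of_nonneg (cos_nonneg_of_mem_Icc ⟨by linarith [hθ.1, pi_pos], hθ.2⟩),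
      abs_of_nonneg (sin_nonneg_of_nonneg_of_le_pi hθ.1 (by linarith [hθ.2, pi_pos]))]
    ring
  rw [hquarter, intervalIntegral.integral_add, intervalIntegral.integral_sub,
    intervalIntegral.integral_sub, intervalIntegral.integral_const_mul,
    intervalIntegral.integral_const_mul, intervalIntegral.integral_const_mul, integral_cos,
    integral_sin, integral_sin_mul_cos₁]
  · simp only [intervalIntegral.integral_const, smul_eq_mul, sin_pi_div_two, sin_zero, cos_zero,
      cos_pi_div_two]
    ring
  all_goals exact Continuous.intervalIntegrable (by fun_prop) _ _

theorem Complex.lintegral_comp_norm_mul_eq_lintegral_polar {φ : ℝ → ℝ≥0∞} {k : ℂ → ℝ≥0∞}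
    (hφ : Measurable φ) (hk : Measurable k) :
    ∫⁻ z, φ ‖z‖ * k z = ∫⁻ s in Ioi 0, ENNReal.ofReal s * φ s *
      ∫⁻ θ in Ioo (-π) π, k (Complex.polarCoord.symm (s, θ)) := by
  have hpolar : Measurable Complex.polarCoord.symm := by
    rw [funext Complex.polarCoord_symm_apply]
    fun_prop
  have hm : Measurable fun p : ℝ × ℝ =>
      ENNReal.ofReal p.1 • (φ ‖Complex.polarCoord.symm p‖ * k (Complex.polarCoord.symm p)) := by
    fun_prop
  rw [← Complex.lintegral_comp_polarCoord_symm,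
    show polarCoord.target = Ioi (0 : ℝ) ×ˢ Ioo (-π) π from rfl, Measure.volume_eq_prod,
    ← Measure.prod_restrict, lintegral_prod _ hm.aemeasurable]
  refine setLIntegral_congr_fun measurableSet_Ioi fun s (hs : 0 < s) => ?_
  simp only [Complex.norm_polarCoord_symm, abs_of_pos hs, smul_eq_mul, ← mul_assoc]
  exact lintegral_const_mul _ (by fun_prop)

theorem lintegral_angular_unitSquareCovariance {s : ℝ} (hs0 : 0 ≤ s) (hs1 : s ≤ 1) :
    ∫⁻ θ in Ioo (-π) π, ENNReal.ofReal (1 - |(Complex.polarCoord.symm (s, θ)).re|) *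
        ENNReal.ofReal (1 - |(Complex.polarCoord.symm (s, θ)).im|)
      = ENNReal.ofReal (2 * π - 8 * s + 2 * s ^ 2) := by
  have hcos (θ : ℝ) : 0 ≤ 1 - s * |cos θ| := by nlinarith [abs_cos_le_one θ, abs_nonneg (cos θ)]
  have hsin (θ : ℝ) : 0 ≤ 1 - s * |sin θ| := by nlinarith [abs_sin_le_one θ, abs_nonneg (sin θ)]
  have hint : IntegrableOn (fun θ => (1 - s * |cos θ|) * (1 - s * |sin θ|)) (Ioo (-π) π) :=
    (Continuous.integrableOn_Icc (by fun_prop)).mono_set Ioo_subset_Icc_self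
  have hpoint (θ : ℝ) : ENNReal.ofReal (1 - |(Complex.polarCoord.symm (s, θ)).re|) *
      ENNReal.ofReal (1 - |(Complex.polarCoord.symm (s, θ)).im|)
      = ENNReal.ofReal ((1 - s * |cos θ|) * (1 - s * |sin θ|)) := by
    rw [ENNReal.ofReal_mul (hcos θ)]
    simp [abs_mul, abs_of_nonneg hs0, Complex.cos_ofReal_re, Complex.sin_ofReal_re]
  rw [lintegral_congr hpoint, ← ofReal_integral_eq_lintegral_ofReal hint
    (ae_of_all _ fun θ => mul_nonneg (hcos θ) (hsin θ)), ← integral_Ioc_eq_integral_Ioo,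
    ← intervalIntegral.integral_of_le (by linarith [pi_pos]),
    integral_one_sub_mul_abs_cos_mul_one_sub_mul_abs_sin]

theorem lintegral_radial_mul_unitSquareCovariance {r β : ℝ} (hr1 : r ≤ 1) :
    ∫⁻ z : ℂ, ENNReal.ofReal (if ‖z‖ ≤ r then ‖z‖ ^ β else 0) *
        (ENNReal.ofReal (1 - |z.re|) * ENNReal.ofReal (1 - |z.im|))
      = ∫⁻ s in Ioc 0 r, ENNReal.ofReal (s ^ (β + 1) * (2 * π - 8 * s + 2 * s ^ 2)) := by
  rw [Complex.lintegral_comp_norm_mul_eq_lintegral_polar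
      (φ := fun t => ENNReal.ofReal (if t ≤ r then t ^ β else 0))
      (k := fun z => ENNReal.ofReal (1 - |z.re|) * ENNReal.ofReal (1 - |z.im|))
      (Measurable.ite measurableSet_Iic (by fun_prop) measurable_const).ennreal_ofReal (by fun_prop),
    ← Iic_inter_Ioi, ← setLIntegral_indicator measurableSet_Iic]
  refine setLIntegral_congr_fun measurableSet_Ioi fun s (hs : 0 < s) => ?_
  by_cases hsr : s ≤ r
  · rw [indicator_of_mem (mem_Iic.2 hsr), if_pos hsr,
      lintegral_angular_unitSquareCovariance hs.le (hsr.trans hr1), ← ENNReal.ofReal_mul hs.le,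
      ← ENNReal.ofReal_mul (by positivity), mul_comm s, ← rpow_add_one hs.ne']
  · simp [hsr]

theorem integral_rpow_mul_quadratic {β : ℝ} (hβ : -2 < β) {r : ℝ} (hr : 0 ≤ r) :
    ∫ s in 0..r, s ^ (β + 1) * (2 * π - 8 * s + 2 * s ^ 2)
      = 2 * π / (β + 2) * r ^ (β + 2) - 8 / (β + 3) * r ^ (β + 3)
        + 2 / (β + 4) * r ^ (β + 4) := by
  have hint {γ : ℝ} (hγ : -1 < γ) : IntervalIntegrable (fun s => s ^ γ) volume 0 r :=
    intervalIntegral.intervalIntegrable_rpow' hγ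
  have hpow {γ : ℝ} (hγ : -1 < γ) : ∫ s in 0..r, s ^ γ = r ^ (γ + 1) / (γ + 1) := by
    rw [integral_rpow (Or.inl hγ), zero_rpow (by linarith), sub_zero]
  have hexpand : EqOn (fun s => s ^ (β + 1) * (2 * π - 8 * s + 2 * s ^ 2))
      (fun s => 2 * π * s ^ (β + 1) - 8 * s ^ (β + 2) + 2 * s ^ (β + 3)) (uIcc 0 r) := by
    intro s hs
    rw [uIcc_of_le hr] at hs
    have h2 : s ^ (β + 2) = s ^ (β + 1) * s := by
      rw [← rpow_add_one' hs.1 (by linarith)]; ring_nf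
    have h3 : s ^ (β + 3) = s ^ (β + 1) * s * s := by
      rw [← h2, ← rpow_add_one' hs.1 (by linarith)]; ring_nf
    simp only [h2, h3]
    ring
  rw [intervalIntegral.integral_congr hexpand, intervalIntegral.integral_add,
    intervalIntegral.integral_sub, intervalIntegral.integral_const_mul,
    intervalIntegral.integral_const_mul, intervalIntegral.integral_const_mul,
    hpow (by linarith), hpow (by linarith), hpow (by linarith)]
  · ring_nf
  · exact (hint (by linarith)).const_mul _
  · exact (hint (by linarith)).const_mul _
  · exact ((hint (by linarith)).const_mul _).sub ((hint (by linarith)).const_mul _)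
  · exact (hint (by linarith)).const_mul _

theorem toReal_setLIntegral_rpow_mul_quadratic {β r : ℝ} (hβ : -2 < β) (hr0 : 0 ≤ r)
    (hr1 : r ≤ 1) :
    (∫⁻ s in Ioc 0 r, ENNReal.ofReal (s ^ (β + 1) * (2 * π - 8 * s + 2 * s ^ 2))).toReal
      = 2 * π / (β + 2) * r ^ (β + 2) - 8 / (β + 3) * r ^ (β + 3)
        + 2 / (β + 4) * r ^ (β + 4) := by
  have hnonneg : ∀ s ∈ Ioc 0 r, 0 ≤ s ^ (β + 1) * (2 * π - 8 * s + 2 * s ^ 2) := fun s hs =>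
    mul_nonneg (rpow_nonneg hs.1.le _) (by nlinarith [pi_gt_three, hs.2])
  have hint : IntegrableOn (fun s => s ^ (β + 1) * (2 * π - 8 * s + 2 * s ^ 2)) (Ioc 0 r) :=
    (intervalIntegrable_iff_integrableOn_Ioc_of_le hr0).1
      ((intervalIntegral.intervalIntegrable_rpow' (by linarith)).mul_continuousOn
        (Continuous.continuousOn (by fun_prop)))
  rw [← ofReal_integral_eq_lintegral_ofReal hint
      ((ae_restrict_iff' measurableSet_Ioc).2 (ae_of_all _ hnonneg)),
    ENNReal.toReal_ofReal (setIntegral_nonneg measurableSet_Ioc hnonneg),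
    ← intervalIntegral.integral_of_le hr0, integral_rpow_mul_quadratic hβ hr0]

theorem EuclideanSpace.lintegral_fin_two_eq_lintegral_complex (f : ℝ → ℝ → ℝ → ℝ≥0∞) :
    ∫⁻ x : EuclideanSpace ℝ (Fin 2), f ‖x‖ (x 0) (x 1) = ∫⁻ z : ℂ, f ‖z‖ z.re z.im := by
  rw [← Complex.orthonormalBasisOneI.measurePreserving_measurableEquiv.lintegral_comp_emb
    Complex.orthonormalBasisOneI.measurableEquiv.measurableEmbedding]
  simp only [OrthonormalBasis.measurableEquiv, Homeomorph.toMeasurableEquiv_coe,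
    LinearIsometryEquiv.coe_toHomeomorph, LinearIsometryEquiv.norm_map,
    Complex.orthonormalBasisOneI_repr_apply, Matrix.cons_val_zero, Matrix.cons_val_one]

/-- For `d = 2`, `W = [0,1]²`, `0 < r ≤ 1` and `β > -2`:
`∫_{W×W} 1{‖x-y‖≤r} ‖x-y‖^β d(x,y)
  = (2π/(β+2)) r^{β+2} - (8/(β+3)) r^{β+3} + (2/(β+4)) r^{β+4}`. -/
theorem stmt12 (r β : ℝ) (hr0 : 0 < r) (hr1 : r ≤ 1) (hβ : -2 < β) :
    ∫ p in ({x : EuclideanSpace ℝ (Fin 2) | ∀ i, x i ∈ Icc (0:ℝ) 1} ×ˢ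
        {x : EuclideanSpace ℝ (Fin 2) | ∀ i, x i ∈ Icc (0:ℝ) 1}),
      (if ‖p.1 - p.2‖ ≤ r then ‖p.1 - p.2‖ ^ β else 0)
      = (2 * π / (β + 2)) * r ^ (β + 2) - (8 / (β + 3)) * r ^ (β + 3)
        + (2 / (β + 4)) * r ^ (β + 4) := by
  have hφ : Measurable fun t : ℝ => if t ≤ r then t ^ β else 0 :=
    Measurable.ite measurableSet_Iic (by fun_prop) measurable_const
  have hF : Measurable fun p : EuclideanSpace ℝ (Fin 2) × EuclideanSpace ℝ (Fin 2) =>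
      if ‖p.1 - p.2‖ ≤ r then ‖p.1 - p.2‖ ^ β else 0 := hφ.comp (by fun_prop)
  have hg : Measurable fun z : EuclideanSpace ℝ (Fin 2) =>
      ENNReal.ofReal (if ‖z‖ ≤ r then ‖z‖ ^ β else 0) := (hφ.comp measurable_norm).ennreal_ofReal
  rw [integral_eq_lintegral_of_nonneg_ae (ae_of_all _ fun p => by split_ifs <;> positivity)
      hF.aestronglyMeasurable, Measure.volume_eq_prod,
    setLIntegral_prod_comp_sub_eq_lintegral_mul_setCovariance volume (by measurability) hg]
  simp only [setCovariance_unitCube, Fin.prod_univ_two]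
  rw [EuclideanSpace.lintegral_fin_two_eq_lintegral_complex fun t a b =>
      ENNReal.ofReal (if t ≤ r then t ^ β else 0) *
        (ENNReal.ofReal (1 - |a|) * ENNReal.ofReal (1 - |b|)),
    lintegral_radial_mul_unitSquareCovariance hr1,
    toReal_setLIntegral_rpow_mul_quadratic hβ hr0.le hr1]
end

section
/- Let W ⊂ ℝ^d be a measurable set with Vol(W)=1 such that Vol({x ∈ W : d(x, ∂W) ≤ r}) ≤ C_W · r for all small r > 0 and some constant C_W. Let W_{-r} := {x ∈ W : d(x, ∂W) ≥ r} and β > -d. Then for all sufficiently small r > 0, | ∫_{W×W} 1{‖x-y‖ ≤ r} ‖x-y‖^β d(x,y) − (d·κ_d/(β+d)) r^{β+d} | ≤ (d·κ_d/(β+d)) C_W r^{β+d+1}. -/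
/-!
For `x ∈ W` farther than `r` from `∂W` the ball `B(x, r)` lies in `W`, so
`∫_W 1{‖x-y‖≤r} ‖x-y‖^β dy` equals the whole-space integral `c r^{β+d}`,
`c = d κ_d / (β + d)`, computed in polar coordinates; for every other `x` it is at most that.
Integrating in `x` gives `c r^{β+d} Vol(W_{-r}) ≤ I ≤ c r^{β+d} Vol(W)`, and
`Vol(W \ W_{-r}) ≤ C_W r`. The hypothesis forces `C_W ≥ 0`, since the boundary layer of a set of
positive measure has positive measure.
-/

open MeasureTheory Filter Metric Set
open scoped ENNReal

section Frontier

variable {E : Type*} [NormedAddCommGroup E] [NormedSpace ℝ E] {W : Set E} {x : E} {r : ℝ}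

theorem ball_subset_interior_of_le_infDist_frontier (hx : x ∈ W)
    (h : r ≤ infDist x (frontier W)) : ball x r ⊆ interior W := by
  rcases le_or_gt r 0 with hr | hr
  · simp [ball_eq_empty.2 hr]
  have not_mem_frontier : ∀ y ∈ ball x r, y ∉ frontier W := fun y hy hyW =>
    (infDist_le_dist_of_mem hyW).not_gt (h.trans_lt' (mem_ball'.1 hy))
  refine (convex_ball x r).isPreconnected.subset_of_closure_inter_subset isOpen_interior
    ⟨x, mem_ball_self hr, ?_⟩ fun y ⟨hyc, hyb⟩ => ?_
  · by_contra hxi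
    exact not_mem_frontier x (mem_ball_self hr) ⟨subset_closure hx, hxi⟩
  · by_contra hyi
    exact not_mem_frontier y hyb ⟨closure_mono interior_subset hyc, hyi⟩

variable [MeasurableSpace E] {μ : Measure E} [μ.IsOpenPosMeasure]

/- Either every point of `W` lies within `r` of `∂W`, or some `x ∈ W` is farther away; then
`B(x, d(x, ∂W)) ⊆ W` meets `B(q, r)` for a frontier point `q`, in a nonempty open subset of the
shell. -/
theorem measure_infDist_frontier_le_pos (hW : μ W ≠ 0) (hr : 0 < r) :
    0 < μ {x ∈ W | infDist x (frontier W) ≤ r} := by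
  by_cases hshell : ∀ x ∈ W, infDist x (frontier W) ≤ r
  · rwa [sep_eq_self_iff_mem_true.2 hshell, pos_iff_ne_zero]
  push Not at hshell
  obtain ⟨x, hxW, hrx⟩ := hshell
  have hfrontier : (frontier W).Nonempty := by
    by_contra h
    rw [not_nonempty_iff_eq_empty.1 h, infDist_empty] at hrx
    linarith
  set R := infDist x (frontier W)
  obtain ⟨q, hq, hxq⟩ := (infDist_lt_iff hfrontier).1 (show R < r + R by linarith)
  obtain ⟨z, hxz, hzq⟩ := exists_dist_lt_lt (by linarith) hr hxq
  have hsub : ball x R ∩ ball q r ⊆ {x ∈ W | infDist x (frontier W) ≤ r} := fun y ⟨hyx, hyq⟩ =>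
    ⟨interior_subset (ball_subset_interior_of_le_infDist_frontier hxW le_rfl hyx),
      (infDist_le_dist_of_mem hq).trans (mem_ball.1 hyq).le⟩
  exact ((isOpen_ball.inter isOpen_ball).measure_pos μ
    ⟨z, mem_ball'.2 hxz, mem_ball.2 hzq⟩).trans_le (measure_mono hsub)

theorem nonneg_of_eventually_measure_infDist_frontier_le {C : ℝ} (hW : μ W ≠ 0)
    (h : ∀ᶠ r in nhdsWithin 0 (Ioi 0),
      μ {x ∈ W | infDist x (frontier W) ≤ r} ≤ ENNReal.ofReal (C * r)) : 0 ≤ C := by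
  obtain ⟨r, hr_shell, hr⟩ := (h.and self_mem_nhdsWithin).exists
  have := (measure_infDist_frontier_le_pos hW hr).trans_le hr_shell
  exact (pos_of_mul_pos_left (ENNReal.ofReal_pos.1 this) hr.le).le

end Frontier

section UpperBound

variable {G : Type*} [AddGroup G] [MeasurableSpace G] [MeasurableAdd₂ G] [MeasurableNeg G]
  {μ : Measure G} [SFinite μ] (W : Set G)

theorem setLIntegral_prod_sub_eq {K : G → ℝ≥0∞} (hK : Measurable K) :
    ∫⁻ p in W ×ˢ W, K (p.1 - p.2) ∂μ.prod μ = ∫⁻ x in W, ∫⁻ y in W, K (x - y) ∂μ ∂μ := by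
  rw [← Measure.prod_restrict,
    lintegral_prod (fun p : G × G => K (p.1 - p.2)) (hK.comp measurable_sub).aemeasurable]

variable [μ.IsAddLeftInvariant] [μ.IsNegInvariant]

theorem setLIntegral_prod_sub_le {K : G → ℝ≥0∞} (hK : Measurable K) :
    ∫⁻ p in W ×ˢ W, K (p.1 - p.2) ∂μ.prod μ ≤ (∫⁻ v, K v ∂μ) * μ W := by
  rw [setLIntegral_prod_sub_eq W hK, ← setLIntegral_const]
  refine lintegral_mono fun x => ?_
  rw [← lintegral_sub_left_eq_self K x]
  exact setLIntegral_le_lintegral _ _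

theorem setIntegral_prod_sub_le {K : G → ℝ} (hK : Measurable K) (hK_nonneg : 0 ≤ K)
    (hK_int : Integrable K μ) (hW : μ W ≠ ∞) :
    ∫ p in W ×ˢ W, K (p.1 - p.2) ∂μ.prod μ ≤ (∫ v, K v ∂μ) * μ.real W := by
  rw [integral_eq_lintegral_of_nonneg_ae (f := fun p : G × G => K (p.1 - p.2))
      (ae_of_all _ fun p => hK_nonneg _) (hK.comp measurable_sub).aestronglyMeasurable,
    measureReal_def, ← ENNReal.toReal_ofReal (integral_nonneg hK_nonneg), ← ENNReal.toReal_mul,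
    ofReal_integral_eq_lintegral_ofReal hK_int (ae_of_all _ hK_nonneg)]
  exact ENNReal.toReal_mono (ENNReal.mul_ne_top hK_int.lintegral_lt_top.ne hW)
    (setLIntegral_prod_sub_le W hK.ennreal_ofReal)

end UpperBound

section LowerBound

variable {E : Type*} [NormedAddCommGroup E] [NormedSpace ℝ E] [MeasurableSpace E]
  [MeasurableAdd₂ E] [MeasurableNeg E] {μ : Measure E} [SFinite μ] [μ.IsAddLeftInvariant]
  [μ.IsNegInvariant] (W : Set E) {r : ℝ}

theorem le_setLIntegral_prod_sub {K : E → ℝ≥0∞} (hK : Measurable K)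
    (hsupp : ∀ v, r < ‖v‖ → K v = 0) :
    (∫⁻ v, K v ∂μ) * μ {x ∈ W | r < infDist x (frontier W)} ≤
      ∫⁻ p in W ×ˢ W, K (p.1 - p.2) ∂μ.prod μ := by
  rw [setLIntegral_prod_sub_eq W hK, ← setLIntegral_const]
  refine (setLIntegral_mono (hK.comp measurable_sub).lintegral_prod_right' fun x hx => ?_).trans
    (lintegral_mono_set (sep_subset _ _))
  refine ((lintegral_sub_left_eq_self K x).symm.trans
    (setLIntegral_eq_of_support_subset fun y hy => ?_).symm).le
  by_contra hyW
  refine hy (hsupp _ (hx.2.trans_le ?_))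
  rw [← dist_eq_norm, dist_comm]
  by_contra hxy
  exact hyW (interior_subset
    (ball_subset_interior_of_le_infDist_frontier hx.1 le_rfl (not_le.1 hxy)))

theorem le_setIntegral_prod_sub {K : E → ℝ} (hK : Measurable K) (hK_nonneg : 0 ≤ K)
    (hK_int : Integrable K μ) (hsupp : ∀ v, r < ‖v‖ → K v = 0) (hW : μ W ≠ ∞) :
    (∫ v, K v ∂μ) * μ.real {x ∈ W | r < infDist x (frontier W)} ≤
      ∫ p in W ×ˢ W, K (p.1 - p.2) ∂μ.prod μ := by
  rw [integral_eq_lintegral_of_nonneg_ae (f := fun p : E × E => K (p.1 - p.2))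
      (ae_of_all _ fun p => hK_nonneg _) (hK.comp measurable_sub).aestronglyMeasurable,
    measureReal_def, ← ENNReal.toReal_ofReal (integral_nonneg hK_nonneg), ← ENNReal.toReal_mul,
    ofReal_integral_eq_lintegral_ofReal hK_int (ae_of_all _ hK_nonneg)]
  refine ENNReal.toReal_mono ?_
    (le_setLIntegral_prod_sub W hK.ennreal_ofReal fun v hv => by simp [hsupp v hv])
  exact ((setLIntegral_prod_sub_le W hK.ennreal_ofReal).trans_lt
    (ENNReal.mul_lt_top hK_int.lintegral_lt_top hW.lt_top)).ne

end LowerBound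

section Radial

variable {E : Type*} [NormedAddCommGroup E] [NormedSpace ℝ E] [FiniteDimensional ℝ E]
  [Nontrivial E] [MeasurableSpace E] [BorelSpace E] (μ : Measure E) [μ.IsAddHaarMeasure]

local notation "n" => (Module.finrank ℝ E : ℝ)

theorem integral_truncated_norm_rpow {β r : ℝ} (hβ : -n < β) (hr : 0 ≤ r) :
    ∫ v, (if ‖v‖ ≤ r then ‖v‖ ^ β else 0) ∂μ =
      n * μ.real (closedBall 0 1) / (β + n) * r ^ (β + n) := by
  have hn : 1 ≤ Module.finrank ℝ E := Module.finrank_pos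
  have hβn : 0 < β + n := by linarith
  set f : ℝ → ℝ := fun s => if s ≤ r then s ^ β else 0
  have radial : ∫ s in Ioi (0 : ℝ), s ^ (Module.finrank ℝ E - 1) • f s =
      r ^ (β + n) / (β + n) := by
    have hf : EqOn (fun s => s ^ (Module.finrank ℝ E - 1) • f s)
        ((Ioc 0 r).indicator fun s => s ^ (β + n - 1)) (Ioi 0) := by
      intro s hs
      rw [mem_Ioi] at hs
      by_cases hsr : s ≤ r
      · simp only [indicator_of_mem (mem_Ioc.2 ⟨hs, hsr⟩), smul_eq_mul, f, if_pos hsr]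
        rw [← Real.rpow_natCast, ← Real.rpow_add hs, Nat.cast_sub hn, Nat.cast_one]
        ring_nf
      · rw [indicator_of_notMem fun h => hsr h.2]
        simp [f, hsr]
    rw [setIntegral_congr_fun measurableSet_Ioi hf, setIntegral_indicator measurableSet_Ioc,
      inter_eq_self_of_subset_right Ioc_subset_Ioi_self, ← intervalIntegral.integral_of_le hr,
      integral_rpow (Or.inl (by linarith)), sub_add_cancel, Real.zero_rpow hβn.ne', sub_zero]
  rw [show (fun v : E => if ‖v‖ ≤ r then ‖v‖ ^ β else 0) = fun v => f ‖v‖ from rfl,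
    integral_fun_norm_addHaar μ f, radial, Measure.addHaar_real_closedBall_eq_addHaar_real_ball,
    nsmul_eq_mul, smul_eq_mul]
  ring

theorem abs_setIntegral_prod_truncated_norm_rpow_sub_le (W : Set E) {β r : ℝ} (hβ : -n < β)
    (hr : 0 < r) (hW : μ W ≠ ∞) :
    |(∫ p in W ×ˢ W, (if ‖p.1 - p.2‖ ≤ r then ‖p.1 - p.2‖ ^ β else 0) ∂μ.prod μ)
        - n * μ.real (closedBall 0 1) / (β + n) * r ^ (β + n) * μ.real W|
      ≤ n * μ.real (closedBall 0 1) / (β + n) * r ^ (β + n) *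
        μ.real {x ∈ W | infDist x (frontier W) ≤ r} := by
  set K : E → ℝ := fun v => if ‖v‖ ≤ r then ‖v‖ ^ β else 0
  set c := n * μ.real (closedBall 0 1) / (β + n) * r ^ (β + n)
  have hc : 0 < c := mul_pos (div_pos (mul_pos (Nat.cast_pos.2 Module.finrank_pos)
    (ENNReal.toReal_pos (measure_closedBall_pos μ 0 one_pos).ne' measure_closedBall_lt_top.ne))
    (by linarith)) (by positivity)
  have hK : ∫ v, K v ∂μ = c := integral_truncated_norm_rpow μ hβ hr.le
  have hK_nonneg : 0 ≤ K := fun v => by positivity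
  have hK_meas : Measurable K :=
    Measurable.ite (measurableSet_le measurable_norm measurable_const) (by fun_prop)
      measurable_const
  have hK_int : Integrable K μ := .of_integral_ne_zero (hK ▸ hc.ne')
  have hupper := setIntegral_prod_sub_le W hK_meas hK_nonneg hK_int hW
  have hlower := le_setIntegral_prod_sub W hK_meas hK_nonneg hK_int
    (fun v hv => if_neg (not_le.2 hv)) hW
  have hsplit : W = {x ∈ W | r < infDist x (frontier W)} ∪
      {x ∈ W | infDist x (frontier W) ≤ r} := by
    ext x; simp [← and_or_left, lt_or_ge]
  have hW_le := measureReal_union_le (μ := μ) {x ∈ W | r < infDist x (frontier W)}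
    {x ∈ W | infDist x (frontier W) ≤ r}
  rw [← hsplit] at hW_le
  rw [hK] at hupper hlower
  change |(∫ p in W ×ˢ W, K (p.1 - p.2) ∂μ.prod μ) - _| ≤ _
  rw [abs_le]
  constructor <;> nlinarith

end Radial

theorem stmt14_general (d : ℕ) (hd : 1 ≤ d) (W : Set (EuclideanSpace ℝ (Fin d)))
    (hvol : volume W = 1) (C : ℝ)
    (hbound : ∀ᶠ r in nhdsWithin (0:ℝ) (Ioi 0),
      volume {x ∈ W | infDist x (frontier W) ≤ r} ≤ ENNReal.ofReal (C * r))
    (β : ℝ) (hβ : -(d:ℝ) < β)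
    (κ : ℝ) (hκ : κ = (volume (closedBall (0 : EuclideanSpace ℝ (Fin d)) 1)).toReal) :
    ∀ᶠ r in nhdsWithin (0:ℝ) (Ioi 0),
      |(∫ p in W ×ˢ W, if ‖p.1 - p.2‖ ≤ r then ‖p.1 - p.2‖ ^ β else 0)
          - ((d : ℝ) * κ / (β + (d : ℝ))) * r ^ (β + (d : ℝ))|
        ≤ ((d : ℝ) * κ / (β + (d : ℝ))) * C * r ^ (β + (d : ℝ) + 1) := by
  have : Nonempty (Fin d) := ⟨⟨0, hd⟩⟩
  have hC := nonneg_of_eventually_measure_infDist_frontier_le (by simp [hvol]) hbound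
  filter_upwards [hbound, self_mem_nhdsWithin] with r hr_shell (hr : 0 < r)
  have key := abs_setIntegral_prod_truncated_norm_rpow_sub_le volume W
    (by rwa [finrank_euclideanSpace_fin]) hr (by simp [hvol])
  simp only [finrank_euclideanSpace_fin, ← Measure.volume_eq_prod, measureReal_def, hvol,
    ENNReal.toReal_one, mul_one, ← hκ] at key
  have hshell : (volume {x ∈ W | infDist x (frontier W) ≤ r}).toReal ≤ C * r :=
    ENNReal.toReal_le_of_le_ofReal (by positivity) hr_shell
  have hc : 0 ≤ d * κ / (β + d) * r ^ (β + d) :=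
    mul_nonneg (div_nonneg (by rw [hκ]; positivity) (by linarith)) (by positivity)
  calc _ ≤ d * κ / (β + d) * r ^ (β + d) *
        (volume {x ∈ W | infDist x (frontier W) ≤ r}).toReal := key
    _ ≤ d * κ / (β + d) * r ^ (β + d) * (C * r) := by gcongr
    _ = _ := by rw [Real.rpow_add_one hr.ne']; ring

/-- If `Vol(W) = 1` and `Vol{x ∈ W : d(x,∂W) ≤ r} ≤ C_W r` for all small `r > 0`, then for all
sufficiently small `r > 0`,
`|∫_{W×W} 1{‖x-y‖≤r}‖x-y‖^β d(x,y) − (d κ_d/(β+d)) r^{β+d}| ≤ (d κ_d/(β+d)) C_W r^{β+d+1}`. -/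
theorem stmt14 (d : ℕ) (hd : 1 ≤ d) (W : Set (EuclideanSpace ℝ (Fin d)))
    (hW : MeasurableSet W) (hvol : volume W = 1) (C : ℝ)
    (hbound : ∀ᶠ r in nhdsWithin (0:ℝ) (Ioi 0),
      volume {x ∈ W | infDist x (frontier W) ≤ r} ≤ ENNReal.ofReal (C * r))
    (β : ℝ) (hβ : -(d:ℝ) < β)
    (κ : ℝ) (hκ : κ = (volume (closedBall (0 : EuclideanSpace ℝ (Fin d)) 1)).toReal) :
    ∀ᶠ r in nhdsWithin (0:ℝ) (Ioi 0),
      |(∫ p in W ×ˢ W, if ‖p.1 - p.2‖ ≤ r then ‖p.1 - p.2‖ ^ β else 0)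
          - ((d : ℝ) * κ / (β + (d : ℝ))) * r ^ (β + (d : ℝ))|
        ≤ ((d : ℝ) * κ / (β + (d : ℝ))) * C * r ^ (β + (d : ℝ) + 1) :=
  stmt14_general d hd W hvol C hbound β hβ κ hκ
end

section
/- Let W ⊂ ℝ^d, let g : W → ℝ be measurable with ∫_W g = 0, assume ∫_W 1{d(x,∂W) ≤ r} |g(x)| dx ≤ C · r for all r > 0, and let β > -d. Then for every r > 0, | ∫_{W×W} 1{‖x-y‖ ≤ r} ‖x-y‖^β g(x) d(x,y) | ≤ (d·κ_d/(β+d)) · C · r^{β+d+1}. -/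
/-! Write the double integral as `∫_W F g` with `F x = ∫_W k (x - y) dy` for the radial kernel
`k z = 1{‖z‖ ≤ r} ‖z‖^β`. Then `0 ≤ F ≤ ∫ k = d κ_d r^(β+d) / (β+d)`, and `F x = ∫ k` as soon as
`closedBall x r ⊆ W`, which holds when `d(x, ∂W) > r`. As `∫_W g = 0`, the integral equals
`∫_W (F - ∫ k) g`, whose integrand vanishes off the layer `d(x, ∂W) ≤ r` and is bounded by
`(∫ k) |g|` on it. -/

open MeasureTheory Filter Metric Set Module

noncomputable def truncPow (r β t : ℝ) : ℝ := if t ≤ r then t ^ β else 0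

section TruncPow

variable {r β t : ℝ} {n : ℕ}

lemma truncPow_nonneg (ht : 0 ≤ t) : 0 ≤ truncPow r β t := by
  unfold truncPow
  split_ifs
  exacts [Real.rpow_nonneg ht β, le_rfl]

lemma truncPow_of_lt (hrt : r < t) : truncPow r β t = 0 := if_neg (not_le.2 hrt)

lemma measurable_truncPow : Measurable (truncPow r β) :=
  Measurable.ite measurableSet_Iic (by fun_prop) measurable_const

lemma pow_smul_truncPow_of_mem_Ioc (ht : t ∈ Ioc 0 r) :
    t ^ n • truncPow r β t = t ^ (β + n) := by
  rw [truncPow, if_pos ht.2, smul_eq_mul, ← Real.rpow_natCast, ← Real.rpow_add ht.1, add_comm]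

lemma pow_smul_truncPow_of_mem_Ioi_sdiff (ht : t ∈ Ioi 0 \ Ioc 0 r) :
    t ^ n • truncPow r β t = 0 := by
  rw [truncPow_of_lt (not_le.1 fun h ↦ ht.2 ⟨ht.1, h⟩), smul_zero]

lemma neg_one_lt_add_natCast_pred (hn : 0 < n) (hβ : -(n : ℝ) < β) :
    -1 < β + ((n - 1 : ℕ) : ℝ) := by
  rw [Nat.cast_pred hn]
  linarith

lemma integrableOn_pow_smul_truncPow (hβ : -1 < β + n) :
    IntegrableOn (fun t ↦ t ^ n • truncPow r β t) (Ioi 0) :=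
  ((intervalIntegral.intervalIntegrable_rpow' hβ).1.congr_fun
      (fun _ ht ↦ (pow_smul_truncPow_of_mem_Ioc ht).symm) measurableSet_Ioc).of_forall_sdiff_eq_zero
    measurableSet_Ioi fun _ ↦ pow_smul_truncPow_of_mem_Ioi_sdiff

lemma integral_pow_smul_truncPow (hr : 0 ≤ r) (hβ : -1 < β + n) :
    ∫ t in Ioi 0, t ^ n • truncPow r β t = r ^ (β + n + 1) / (β + n + 1) := by
  rw [setIntegral_eq_of_subset_of_forall_sdiff_eq_zero measurableSet_Ioi Ioc_subset_Ioi_self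
      fun _ ↦ pow_smul_truncPow_of_mem_Ioi_sdiff,
    setIntegral_congr_fun measurableSet_Ioc fun _ ↦ pow_smul_truncPow_of_mem_Ioc,
    ← intervalIntegral.integral_of_le hr, integral_rpow (.inl hβ),
    Real.zero_rpow (by linarith), sub_zero]

end TruncPow

variable {E : Type*} [NormedAddCommGroup E] [NormedSpace ℝ E] [FiniteDimensional ℝ E]

lemma closedBall_subset_of_lt_infDist_frontier {s : Set E} {x : E} {r : ℝ} (hx : x ∈ s)
    (hr : r < infDist x (frontier s)) : closedBall x r ⊆ s := by
  intro z hz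
  by_contra hzs
  obtain ⟨y, hy, hxy⟩ := exists_mem_frontier_infDist_compl_eq_dist hx fun h ↦ hzs (h ▸ mem_univ z)
  have hfy := infDist_le_dist_of_mem (x := x) hy
  have hz' := infDist_le_dist_of_mem (x := x) (show z ∈ sᶜ from hzs)
  rw [mem_closedBall, dist_comm] at hz
  linarith

variable [MeasurableSpace E] [BorelSpace E] {μ : Measure E} [μ.IsAddHaarMeasure]

section Radial

variable [Nontrivial E] {r β : ℝ}

lemma integrable_truncPow_norm (hβ : -(finrank ℝ E : ℝ) < β) :
    Integrable (fun z : E ↦ truncPow r β ‖z‖) μ :=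
  (integrable_fun_norm_addHaar μ).2
    (integrableOn_pow_smul_truncPow (neg_one_lt_add_natCast_pred finrank_pos hβ))

lemma integral_truncPow_norm (hr : 0 ≤ r) (hβ : -(finrank ℝ E : ℝ) < β) :
    ∫ z, truncPow r β ‖z‖ ∂μ =
      finrank ℝ E * μ.real (ball 0 1) / (β + finrank ℝ E) * r ^ (β + finrank ℝ E) := by
  rw [integral_fun_norm_addHaar,
    integral_pow_smul_truncPow hr (neg_one_lt_add_natCast_pred finrank_pos hβ),
    Nat.cast_pred finrank_pos, add_assoc β, sub_add_cancel, nsmul_eq_mul, smul_eq_mul]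
  ring

end Radial

section Convolution

variable {k : E → ℝ} {g : E → ℝ} {r : ℝ} {W : Set E}

lemma setIntegral_comp_sub_le_integral (hk : Integrable k μ) (hk_nonneg : ∀ z, 0 ≤ k z) (x : E) :
    ∫ y in W, k (x - y) ∂μ ≤ ∫ z, k z ∂μ :=
  integral_sub_left_eq_self k μ x ▸
    setIntegral_le_integral (hk.comp_sub_left x) (.of_forall fun _ ↦ hk_nonneg _)

lemma setIntegral_comp_sub_eq_integral (hk_supp : ∀ z, r < ‖z‖ → k z = 0) {x : E}
    (hx : closedBall x r ⊆ W) : ∫ y in W, k (x - y) ∂μ = ∫ z, k z ∂μ := by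
  rw [← integral_sub_left_eq_self k μ x]
  refine setIntegral_eq_integral_of_forall_compl_eq_zero fun y hy ↦ hk_supp _ ?_
  rw [← dist_eq_norm]
  exact not_le.1 fun h ↦ hy (hx (mem_closedBall_comm.1 h))

lemma stronglyMeasurable_setIntegral_comp_sub (hk_meas : Measurable k) :
    StronglyMeasurable fun x ↦ ∫ y in W, k (x - y) ∂μ :=
  (hk_meas.comp (measurable_fst.sub measurable_snd)).stronglyMeasurable.integral_prod_right'
    (f := fun p : E × E ↦ k (p.1 - p.2))

lemma integrable_prod_comp_sub_mul (hk_meas : Measurable k) (hk : Integrable k μ)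
    (hk_nonneg : ∀ z, 0 ≤ k z) (hg : IntegrableOn g W μ) :
    Integrable (fun p : E × E ↦ k (p.1 - p.2) * g p.1) ((μ.restrict W).prod (μ.restrict W)) := by
  have hmeas : AEStronglyMeasurable (fun p : E × E ↦ k (p.1 - p.2) * g p.1)
      ((μ.restrict W).prod (μ.restrict W)) :=
    (hk_meas.comp (measurable_fst.sub measurable_snd)).aestronglyMeasurable.mul
      hg.aestronglyMeasurable.comp_fst
  refine (integrable_prod_iff hmeas).2 ⟨.of_forall fun x ↦ ?_, ?_⟩
  · exact (hk.comp_sub_left x).integrableOn.mul_const (g x)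
  refine (hg.norm.const_mul (∫ z, k z ∂μ)).mono' hmeas.norm.integral_prod_right'
    (.of_forall fun x ↦ ?_)
  have hnorm : ∫ y in W, ‖k (x - y) * g x‖ ∂μ = (∫ y in W, k (x - y) ∂μ) * ‖g x‖ := by
    simp only [norm_mul, Real.norm_of_nonneg (hk_nonneg _), integral_mul_const]
  rw [hnorm, Real.norm_of_nonneg
    (mul_nonneg (integral_nonneg fun _ ↦ hk_nonneg _) (norm_nonneg _))]
  gcongr
  exact setIntegral_comp_sub_le_integral hk hk_nonneg x

lemma setIntegral_prod_comp_sub_mul (hk_meas : Measurable k) (hk : Integrable k μ)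
    (hk_nonneg : ∀ z, 0 ≤ k z) (hg : IntegrableOn g W μ) :
    ∫ p in W ×ˢ W, k (p.1 - p.2) * g p.1 ∂μ.prod μ =
      ∫ x in W, (∫ y in W, k (x - y) ∂μ) * g x ∂μ := by
  rw [← Measure.prod_restrict,
    integral_prod _ (integrable_prod_comp_sub_mul hk_meas hk hk_nonneg hg)]
  simp only [integral_mul_const]

theorem abs_setIntegral_prod_comp_sub_mul_le (hW : MeasurableSet W) (hk_meas : Measurable k)
    (hk : Integrable k μ) (hk_nonneg : ∀ z, 0 ≤ k z) (hk_supp : ∀ z, r < ‖z‖ → k z = 0)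
    (hg : IntegrableOn g W μ) (hzero : ∫ x in W, g x ∂μ = 0) :
    |∫ p in W ×ˢ W, k (p.1 - p.2) * g p.1 ∂μ.prod μ| ≤
      (∫ z, k z ∂μ) * ∫ x in W, (if infDist x (frontier W) ≤ r then |g x| else 0) ∂μ := by
  set M := ∫ z, k z ∂μ
  set F := fun x ↦ ∫ y in W, k (x - y) ∂μ
  have hF_nonneg x : 0 ≤ F x := integral_nonneg fun _ ↦ hk_nonneg _
  have hF_le x : F x ≤ M := setIntegral_comp_sub_le_integral hk hk_nonneg x
  have hFg : IntegrableOn (fun x ↦ F x * g x) W μ :=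
    (hg.norm.const_mul M).mono'
      ((stronglyMeasurable_setIntegral_comp_sub hk_meas).aestronglyMeasurable.mul hg.1)
      (.of_forall fun x ↦ by
        rw [norm_mul, Real.norm_of_nonneg (hF_nonneg x)]
        exact mul_le_mul_of_nonneg_right (hF_le x) (norm_nonneg _))
  have hbdry_int : IntegrableOn (fun x ↦ if infDist x (frontier W) ≤ r then |g x| else 0) W μ := by
    have hS : MeasurableSet {x | infDist x (frontier W) ≤ r} :=
      measurableSet_le (continuous_infDist_pt _).measurable measurable_const
    refine (hg.norm.indicator hS).congr (.of_forall fun x ↦ ?_)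
    simp only [indicator_apply, mem_ofPred_eq, Real.norm_eq_abs]
  have hpointwise : ∀ x ∈ W,
      |(F x - M) * g x| ≤ M * if infDist x (frontier W) ≤ r then |g x| else 0 := by
    intro x hx
    split_ifs with hxr
    · rw [abs_mul, abs_of_nonpos (sub_nonpos.2 (hF_le x))]
      exact mul_le_mul_of_nonneg_right (by linarith [hF_nonneg x]) (abs_nonneg _)
    · have hFM : F x = M := setIntegral_comp_sub_eq_integral hk_supp
        (closedBall_subset_of_lt_infDist_frontier hx (not_le.1 hxr))
      simp [hFM]
  calc |∫ p in W ×ˢ W, k (p.1 - p.2) * g p.1 ∂μ.prod μ|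
      = |∫ x in W, (F x - M) * g x ∂μ| := by
        rw [setIntegral_prod_comp_sub_mul hk_meas hk hk_nonneg hg]
        simp only [sub_mul, integral_sub hFg (hg.const_mul M), integral_const_mul, hzero,
          mul_zero, sub_zero, F]
    _ ≤ ∫ x in W, |(F x - M) * g x| ∂μ := abs_integral_le_integral_abs
    _ ≤ ∫ x in W, M * (if infDist x (frontier W) ≤ r then |g x| else 0) ∂μ :=
        setIntegral_mono_on
          ((hFg.sub (hg.const_mul M)).abs.congr
            (.of_forall fun x ↦ by simp only [Pi.sub_apply, sub_mul]))
          (hbdry_int.const_mul M) hW hpointwise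
    _ = M * ∫ x in W, (if infDist x (frontier W) ≤ r then |g x| else 0) ∂μ :=
        integral_const_mul M _

end Convolution

theorem stmt15_general (d : ℕ) (hd : 1 ≤ d) (W : Set (EuclideanSpace ℝ (Fin d)))
    (hW : MeasurableSet W)
    (g : EuclideanSpace ℝ (Fin d) → ℝ) (hgint : IntegrableOn g W)
    (hzero : ∫ x in W, g x = 0) (C : ℝ)
    (hbdry : ∀ r > (0:ℝ),
      ∫ x in W, (if infDist x (frontier W) ≤ r then |g x| else 0) ≤ C * r)
    (β : ℝ) (hβ : -(d:ℝ) < β)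
    (κ : ℝ) (hκ : κ = (volume (closedBall (0 : EuclideanSpace ℝ (Fin d)) 1)).toReal) :
    ∀ r > (0:ℝ),
      |∫ p in W ×ˢ W, if ‖p.1 - p.2‖ ≤ r then ‖p.1 - p.2‖ ^ β * g p.1 else 0|
        ≤ ((d : ℝ) * κ / (β + (d : ℝ))) * C * r ^ (β + (d : ℝ) + 1) := by
  intro r hr
  have : Nonempty (Fin d) := Fin.pos_iff_nonempty.mp hd
  have hdim : finrank ℝ (EuclideanSpace ℝ (Fin d)) = d := finrank_euclideanSpace_fin
  have hβ' : -(finrank ℝ (EuclideanSpace ℝ (Fin d)) : ℝ) < β := by rwa [hdim]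
  have hκ' : κ = volume.real (ball (0 : EuclideanSpace ℝ (Fin d)) 1) := by
    rw [hκ, Measure.addHaar_closedBall_eq_addHaar_ball, measureReal_def]
  have hintegrand : (fun p : EuclideanSpace ℝ (Fin d) × EuclideanSpace ℝ (Fin d) ↦
      if ‖p.1 - p.2‖ ≤ r then ‖p.1 - p.2‖ ^ β * g p.1 else 0) =
      fun p ↦ truncPow r β ‖p.1 - p.2‖ * g p.1 := by
    simp only [truncPow, ite_mul, zero_mul]
  rw [hintegrand, Measure.volume_eq_prod]
  calc _ ≤ (∫ z, truncPow r β ‖z‖) *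
        ∫ x in W, (if infDist x (frontier W) ≤ r then |g x| else 0) :=
        abs_setIntegral_prod_comp_sub_mul_le hW (measurable_truncPow.comp measurable_norm)
          (integrable_truncPow_norm hβ') (fun z ↦ truncPow_nonneg (norm_nonneg z))
          (fun _ ↦ truncPow_of_lt) hgint hzero
    _ ≤ (∫ z, truncPow r β ‖z‖) * (C * r) :=
        mul_le_mul_of_nonneg_left (hbdry r hr)
          (integral_nonneg fun z ↦ truncPow_nonneg (norm_nonneg z))
    _ = _ := by
        rw [integral_truncPow_norm hr.le hβ', hdim, ← hκ', Real.rpow_add_one hr.ne']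
        ring

/-- If `g` is integrable on `W` with `∫_W g = 0` and
`∫_W 1{d(x,∂W) ≤ r} |g(x)| dx ≤ C r` for all `r > 0`, then for every `r > 0`,
`|∫_{W×W} 1{‖x-y‖≤r}‖x-y‖^β g(x) d(x,y)| ≤ (d κ_d/(β+d)) C r^{β+d+1}`. -/
theorem stmt15 (d : ℕ) (hd : 1 ≤ d) (W : Set (EuclideanSpace ℝ (Fin d)))
    (hW : MeasurableSet W)
    (g : EuclideanSpace ℝ (Fin d) → ℝ) (hg : Measurable g) (hgint : IntegrableOn g W)
    (hzero : ∫ x in W, g x = 0) (C : ℝ)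
    (hbdry : ∀ r > (0:ℝ),
      ∫ x in W, (if infDist x (frontier W) ≤ r then |g x| else 0) ≤ C * r)
    (β : ℝ) (hβ : -(d:ℝ) < β)
    (κ : ℝ) (hκ : κ = (volume (closedBall (0 : EuclideanSpace ℝ (Fin d)) 1)).toReal) :
    ∀ r > (0:ℝ),
      |∫ p in W ×ˢ W, if ‖p.1 - p.2‖ ≤ r then ‖p.1 - p.2‖ ^ β * g p.1 else 0|
        ≤ ((d : ℝ) * κ / (β + (d : ℝ))) * C * r ^ (β + (d : ℝ) + 1) :=
  stmt15_general d hd W hW g hgint hzero C hbdry β hβ κ hκ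
end
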